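/- arXiv:2106.10640 — 6 statements merged into one kernel-verified Lean document; each statement's English description precedes it below -/
import Mathlib

section
/- Log-concavity for monotone walks (Corollary 4.2, weighted counting form): fix A = (0,a) ∈ Γ, B = (m,b) ∈ Γ, and 0 < ℓ < m. Let π, ω : ℤ → ℝ be nonnegative (y-invariant weights for right-steps and up-steps). A monotone lattice path from A to B is a function w : {0,…,u} → ℤ², u = m + b − a, with w(0) = A, w(u) = B, and w(t+1) − w(t) ∈ {(1,0),(0,1)} for all t < u; it lies in Γ if all its points do. The weight of such a path is the product over its steps of π(i) for each step (1,0) taken from a point with x-coordinate i, and ω(i) for each step (0,1) taken from a point with x-coordinate i. For k ∈ ℤ let q(k) be the sum of the weights of all monotone lattice paths from A to B lying in Γ whose first point with x-coordinate ℓ is (ℓ,k). Then q(k)² ≥ q(k+1)·q(k−1) for every k ∈ ℤ with lo(ℓ) ≤ k−1 and k+1 ≤ hi(ℓ). -/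
/-- Monotone steps: right and up. -/
def monoSteps : Set (ℤ × ℤ) := {(1, 0), (0, 1)}

/-- The lattice region `Γ = {(i,j) : 0 ≤ i ≤ m, lo i ≤ j ≤ hi i}`. -/
def Region (m : ℤ) (lo hi : ℤ → ℤ) : Set (ℤ × ℤ) :=
  {p | 0 ≤ p.1 ∧ p.1 ≤ m ∧ lo p.1 ≤ p.2 ∧ p.2 ≤ hi p.1}

/-- A lattice path of arbitrary finite length. -/
def LatticePath := Σ n : ℕ, Fin (n + 1) → ℤ × ℤ

/-- The weight of a single monotone step from `p` to `q`: `π i` for a right-step and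
`ω i` for an up-step taken from a point with `x`-coordinate `i`. -/
noncomputable def monoStepWeight (π ω : ℤ → ℝ) (p q : ℤ × ℤ) : ℝ :=
  if q - p = (1, 0) then π p.1
  else if q - p = (0, 1) then ω p.1
  else 0

/-- `monoExit π ω Γ a m b ℓ k` is `q(k)`: the total weight of monotone lattice paths
from `(0,a)` to `(m,b)` of length `m + b - a` lying in `Γ` whose first point with
`x`-coordinate `ℓ` is `(ℓ,k)`. -/
noncomputable def monoExit (π ω : ℤ → ℝ) (Γ : Set (ℤ × ℤ)) (a m b ℓ k : ℤ) : ℝ :=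
  ∑' ξ : {ξ : LatticePath //
      (ξ.1 : ℤ) = m + b - a ∧
      ξ.2 0 = (0, a) ∧ ξ.2 (Fin.last ξ.1) = (m, b) ∧
      (∀ t : Fin ξ.1, ξ.2 t.succ - ξ.2 t.castSucc ∈ monoSteps) ∧
      (∀ t, ξ.2 t ∈ Γ) ∧
      (∃ t, ξ.2 t = (ℓ, k) ∧ ∀ s < t, (ξ.2 s).1 ≠ ℓ)},
    ∏ t : Fin ξ.1.1, monoStepWeight π ω (ξ.1.2 t.castSucc) (ξ.1.2 t.succ)

/-!
A monotone path from `(0, a)` to `(m, b)` is encoded by its profile `t : ℤ → ℤ`, where `t x` is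
the height at which the path leaves column `x` (so `t = a` left of `0` and `t = b` from `m` on).
The path lies in `Γ` and first meets the line `x = ℓ` at `(ℓ, k)` exactly when
`lo x ≤ t (x - 1)`, `t x ≤ hi x` and `t (ℓ - 1) = k`, and its weight is
`∏ π x * ∏ ω x ^ (t x - t (x - 1))`. If `p` is a profile for `k + 1` and `s` one for `k - 1`,
then `p ⊓ (s + 1)` and `p ⊔ (s + 1) - 1` are profiles for `k`, and since the `ω`-exponents are
additive, the weights of the two pairs have the same product. The four functions theorem of
Ahlswede and Daykin then gives `q(k + 1) q(k - 1) ≤ q(k)²`.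
-/

open Finset

theorem Finset.sum_mul_sum_le_sum_mul_sum_of_inf_sup_mem {α β : Type*} [DistribLattice α]
    [CommSemiring β] [LinearOrder β] [IsStrictOrderedRing β] [ExistsAddOfLE β]
    {w : α → β} (hw : 0 ≤ w) {A B C D : Finset α}
    (hinf : ∀ a ∈ A, ∀ b ∈ B, a ⊓ b ∈ C) (hsup : ∀ a ∈ A, ∀ b ∈ B, a ⊔ b ∈ D)
    (hmul : ∀ a ∈ A, ∀ b ∈ B, w a * w b ≤ w (a ⊓ b) * w (a ⊔ b)) :
    (∑ a ∈ A, w a) * ∑ b ∈ B, w b ≤ (∑ c ∈ C, w c) * ∑ d ∈ D, w d := by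
  classical
  let wA : α → β := fun a => if a ∈ A then w a else 0
  let wB : α → β := fun b => if b ∈ B then w b else 0
  have hwA : 0 ≤ wA := fun a => ite_nonneg (hw a) le_rfl
  have hwB : 0 ≤ wB := fun b => ite_nonneg (hw b) le_rfl
  have hAB : ∀ a b, wA a * wB b ≤ w (a ⊓ b) * w (a ⊔ b) := by
    intro a b
    by_cases ha : a ∈ A
    · by_cases hb : b ∈ B
      · simpa [wA, wB, ha, hb] using hmul a ha b hb
      · simpa [wB, hb] using mul_nonneg (hw _) (hw _)
    · simpa [wA, ha] using mul_nonneg (hw _) (hw _)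
  have key := four_functions_theorem wA wB w w hwA hwB hw hw hAB A B
  rw [sum_congr rfl fun a ha => if_pos ha, sum_congr rfl fun b hb => if_pos hb] at key
  refine key.trans (mul_le_mul ?_ ?_ (sum_nonneg fun _ _ => hw _) (sum_nonneg fun _ _ => hw _))
  · exact sum_le_sum_of_subset_of_nonneg (infs_subset_iff.2 hinf) fun _ _ _ => hw _
  · exact sum_le_sum_of_subset_of_nonneg (sups_subset_iff.2 hsup) fun _ _ _ => hw _

lemma monoStepWeight_add_right (π ω : ℤ → ℝ) (p : ℤ × ℤ) :
    monoStepWeight π ω p (p + (1, 0)) = π p.1 := by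
  simp [monoStepWeight]

lemma monoStepWeight_add_up (π ω : ℤ → ℝ) (p : ℤ × ℤ) :
    monoStepWeight π ω p (p + (0, 1)) = ω p.1 := by
  simp [monoStepWeight]

lemma le_of_sub_mem_monoSteps {p q : ℤ × ℤ} (h : q - p ∈ monoSteps) : p ≤ q := by
  simp only [monoSteps, Set.mem_insert_iff, Set.mem_singleton_iff] at h
  rcases h with h | h <;>
  · rw [sub_eq_iff_eq_add'] at h
    simp [h, Prod.le_def]

noncomputable def columnWeight (ω : ℤ → ℝ) (m : ℤ) (t : ℤ → ℤ) : ℝ :=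
  ∏ x ∈ Icc 0 m, ω x ^ (t x - t (x - 1)).toNat

section columnWeight

variable {ω : ℤ → ℝ} {m : ℤ}

lemma columnWeight_nonneg (hω : ∀ i, 0 ≤ ω i) (t : ℤ → ℤ) : 0 ≤ columnWeight ω m t :=
  prod_nonneg fun x _ => pow_nonneg (hω x) _

lemma columnWeight_add_const (t : ℤ → ℤ) (c : ℤ) :
    columnWeight ω m (t + fun _ => c) = columnWeight ω m t := by
  simp only [columnWeight, Pi.add_apply, add_sub_add_right_eq_sub]

lemma columnWeight_inf_mul_columnWeight_sup {p q : ℤ → ℤ} (hp : Monotone p) (hq : Monotone q) :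
    columnWeight ω m (p ⊓ q) * columnWeight ω m (p ⊔ q) =
      columnWeight ω m p * columnWeight ω m q := by
  simp only [columnWeight, ← prod_mul_distrib, ← pow_add]
  refine prod_congr rfl fun x _ => congrArg _ ?_
  have := hp (sub_one_lt x).le
  have := hq (sub_one_lt x).le
  simp only [Pi.inf_apply, Pi.sup_apply]
  omega

end columnWeight

structure IsProfile (a b m : ℤ) (t : ℤ → ℤ) : Prop where
  monotone : Monotone t
  eq_left : ∀ x < 0, t x = a
  eq_right : ∀ x, m ≤ x → t x = b

structure IsExitProfile (lo hi : ℤ → ℤ) (a b m ℓ k : ℤ) (t : ℤ → ℤ) : Prop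
    extends IsProfile a b m t where
  lo_le : ∀ x, 0 ≤ x → x ≤ m → lo x ≤ t (x - 1)
  le_hi : ∀ x, 0 ≤ x → x ≤ m → t x ≤ hi x
  exit_eq : t (ℓ - 1) = k

section Profile

variable {lo hi : ℤ → ℤ} {a b m ℓ k : ℤ} {t : ℤ → ℤ}

lemma IsProfile.left_le (ht : IsProfile a b m t) (x : ℤ) : a ≤ t x := by
  rcases lt_or_ge x 0 with hx | hx
  · exact (ht.eq_left x hx).ge
  · exact ht.eq_left (-1) (by norm_num) ▸ ht.monotone (by omega)

lemma IsProfile.le_right (ht : IsProfile a b m t) (x : ℤ) : t x ≤ b := by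
  rcases le_or_gt m x with hx | hx
  · exact (ht.eq_right x hx).le
  · exact ht.eq_right m le_rfl ▸ ht.monotone hx.le

lemma setOf_isProfile_finite (a b m : ℤ) : {t | IsProfile a b m t}.Finite := by
  refine Set.Finite.of_finite_image (f := fun t (x : Ico 0 m) => t x) ?_ ?_
  · refine (Set.Finite.pi fun _ => Set.finite_Icc a b).subset ?_
    rintro _ ⟨t, ht, rfl⟩ x -
    exact ⟨ht.left_le x, ht.le_right x⟩
  · intro t ht t' ht' h
    funext x
    by_cases hx : x < 0
    · rw [ht.eq_left x hx, ht'.eq_left x hx]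
    by_cases hx' : m ≤ x
    · rw [ht.eq_right x hx', ht'.eq_right x hx']
    exact congrFun h ⟨x, mem_Ico.2 ⟨by omega, by omega⟩⟩

variable (lo hi a b m ℓ k) in
noncomputable def exitProfiles : Finset (ℤ → ℤ) :=
  ((setOf_isProfile_finite a b m).subset fun _ ht => ht.toIsProfile :
    {t | IsExitProfile lo hi a b m ℓ k t}.Finite).toFinset

lemma mem_exitProfiles : t ∈ exitProfiles lo hi a b m ℓ k ↔ IsExitProfile lo hi a b m ℓ k t :=
  Set.Finite.mem_toFinset _

lemma IsExitProfile.inf_add_one {p s : ℤ → ℤ} (hp : IsExitProfile lo hi a b m ℓ (k + 1) p)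
    (hs : IsExitProfile lo hi a b m ℓ (k - 1) s) : IsExitProfile lo hi a b m ℓ k (p ⊓ (s + 1)) where
  monotone := hp.monotone.inf (hs.monotone.add_const 1)
  eq_left x hx := by
    have := hp.eq_left x hx; have := hs.eq_left x hx
    simp only [Pi.inf_apply, Pi.add_apply, Pi.one_apply]; omega
  eq_right x hx := by
    have := hp.eq_right x hx; have := hs.eq_right x hx
    simp only [Pi.inf_apply, Pi.add_apply, Pi.one_apply]; omega
  lo_le x h0 hm := by
    have := hp.lo_le x h0 hm; have := hs.lo_le x h0 hm
    simp only [Pi.inf_apply, Pi.add_apply, Pi.one_apply]; omega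
  le_hi x h0 hm := by
    have := hp.le_hi x h0 hm
    simp only [Pi.inf_apply, Pi.add_apply, Pi.one_apply]; omega
  exit_eq := by
    have := hp.exit_eq; have := hs.exit_eq
    simp only [Pi.inf_apply, Pi.add_apply, Pi.one_apply]; omega

lemma IsExitProfile.sup_add_one_sub_one {p s : ℤ → ℤ} (hp : IsExitProfile lo hi a b m ℓ (k + 1) p)
    (hs : IsExitProfile lo hi a b m ℓ (k - 1) s) :
    IsExitProfile lo hi a b m ℓ k (p ⊔ (s + 1) - 1) where
  monotone := (hp.monotone.sup (hs.monotone.add_const 1)).add_const (-1)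
  eq_left x hx := by
    have := hp.eq_left x hx; have := hs.eq_left x hx
    simp only [Pi.sub_apply, Pi.sup_apply, Pi.add_apply, Pi.one_apply]; omega
  eq_right x hx := by
    have := hp.eq_right x hx; have := hs.eq_right x hx
    simp only [Pi.sub_apply, Pi.sup_apply, Pi.add_apply, Pi.one_apply]; omega
  lo_le x h0 hm := by
    have := hs.lo_le x h0 hm
    simp only [Pi.sub_apply, Pi.sup_apply, Pi.add_apply, Pi.one_apply]; omega
  le_hi x h0 hm := by
    have := hp.le_hi x h0 hm; have := hs.le_hi x h0 hm
    simp only [Pi.sub_apply, Pi.sup_apply, Pi.add_apply, Pi.one_apply]; omega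
  exit_eq := by
    have := hp.exit_eq; have := hs.exit_eq
    simp only [Pi.sub_apply, Pi.sup_apply, Pi.add_apply, Pi.one_apply]; omega

lemma sum_columnWeight_exitProfiles_mul_le {ω : ℤ → ℝ} (hω : ∀ i, 0 ≤ ω i) :
    (∑ t ∈ exitProfiles lo hi a b m ℓ (k + 1), columnWeight ω m t) *
        ∑ t ∈ exitProfiles lo hi a b m ℓ (k - 1), columnWeight ω m t ≤
      (∑ t ∈ exitProfiles lo hi a b m ℓ k, columnWeight ω m t) ^ 2 := by
  let shift : (ℤ → ℤ) ↪ (ℤ → ℤ) := (Equiv.addRight 1).toEmbedding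
  have sum_shift (P : Finset (ℤ → ℤ)) :
      ∑ t ∈ P.map shift, columnWeight ω m t = ∑ t ∈ P, columnWeight ω m t :=
    sum_map _ _ _ |>.trans (sum_congr rfl fun t _ => columnWeight_add_const t 1)
  calc _ = (∑ t ∈ exitProfiles lo hi a b m ℓ (k + 1), columnWeight ω m t) *
        ∑ t ∈ (exitProfiles lo hi a b m ℓ (k - 1)).map shift, columnWeight ω m t := by
        rw [sum_shift]
    _ ≤ (∑ t ∈ exitProfiles lo hi a b m ℓ k, columnWeight ω m t) *
        ∑ t ∈ (exitProfiles lo hi a b m ℓ k).map shift, columnWeight ω m t := by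
      refine sum_mul_sum_le_sum_mul_sum_of_inf_sup_mem (columnWeight_nonneg hω) ?_ ?_ ?_
      all_goals
        simp only [mem_map, mem_exitProfiles,
          forall_exists_index, and_imp, forall_apply_eq_imp_iff₂]
        intro p hp s hs
      · exact hp.inf_add_one hs
      · exact ⟨_, hp.sup_add_one_sub_one hs, sub_add_cancel _ _⟩
      · exact (columnWeight_inf_mul_columnWeight_sup (q := s + 1) hp.monotone
          (hs.monotone.add_const 1)).ge
    _ = _ := by rw [sum_shift, sq]

end Profile

def profileWalk (a : ℤ) (t : ℤ → ℤ) : ℕ → ℤ × ℤ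
  | 0 => (0, a)
  | j + 1 =>
    let p := profileWalk a t j
    if t p.1 ≤ p.2 then p + (1, 0) else p + (0, 1)

def staircase (t : ℤ → ℤ) : Set (ℤ × ℤ) := {p | t (p.1 - 1) ≤ p.2 ∧ p.2 ≤ t p.1}

lemma mem_staircase {t : ℤ → ℤ} {p : ℤ × ℤ} : p ∈ staircase t ↔ t (p.1 - 1) ≤ p.2 ∧ p.2 ≤ t p.1 :=
  Iff.rfl

section profileWalk

variable {a : ℤ} {t : ℤ → ℤ}

lemma profileWalk_succ_sub_mem_monoSteps (j : ℕ) :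
    profileWalk a t (j + 1) - profileWalk a t j ∈ monoSteps := by
  simp only [profileWalk]
  split_ifs <;> simp [monoSteps]

lemma eq_of_mem_staircase (ht : Monotone t) {p q : ℤ × ℤ} (hp : p ∈ staircase t)
    (hq : q ∈ staircase t) (h : p.1 + p.2 = q.1 + q.2) : p = q := by
  obtain ⟨hp₁, hp₂⟩ := hp
  obtain ⟨hq₁, hq₂⟩ := hq
  rcases lt_trichotomy p.1 q.1 with hpq | hpq | hpq
  · have := ht (show p.1 ≤ q.1 - 1 by omega)
    omega
  · exact Prod.ext hpq (by omega)
  · have := ht (show q.1 ≤ p.1 - 1 by omega)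
    omega

lemma profileWalk_spec (ht : Monotone t) (ha : t (-1) = a) (j : ℕ) :
    0 ≤ (profileWalk a t j).1 ∧ (profileWalk a t j).1 + (profileWalk a t j).2 = j + a ∧
      profileWalk a t j ∈ staircase t := by
  induction j with
  | zero =>
    have := ht (show (-1 : ℤ) ≤ 0 by norm_num)
    simp only [profileWalk, mem_staircase, zero_sub]
    omega
  | succ j ih =>
    obtain ⟨h₀, hsum, h₁, h₂⟩ := ih
    have := ht (show (profileWalk a t j).1 ≤ (profileWalk a t j).1 + 1 by omega)
    simp only [profileWalk, mem_staircase]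
    split_ifs <;> simp only [Prod.fst_add, Prod.snd_add, add_zero, add_sub_cancel_right] <;>
      push_cast <;> omega

lemma profileWalk_eq_of_mem_staircase (ht : Monotone t) (ha : t (-1) = a) {p : ℤ × ℤ}
    (hp : p ∈ staircase t) {j : ℕ} (hj : (j : ℤ) + a = p.1 + p.2) : profileWalk a t j = p :=
  have ⟨_, hsum, hwalk⟩ := profileWalk_spec ht ha j
  eq_of_mem_staircase ht hwalk hp (hsum.trans hj)

lemma add_le_of_le_profileWalk_fst (ht : Monotone t) (ha : t (-1) = a) {x : ℤ} {j : ℕ}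
    (hx : x ≤ (profileWalk a t j).1) : x + t (x - 1) ≤ j + a := by
  obtain ⟨-, hsum, hwalk, -⟩ := profileWalk_spec ht ha j
  have := ht (show x - 1 ≤ (profileWalk a t j).1 - 1 by omega)
  omega

lemma prod_monoStepWeight_profileWalk (π ω : ℤ → ℝ) (ht : Monotone t) (ha : t (-1) = a)
    (j : ℕ) :
    ∏ i ∈ range j, monoStepWeight π ω (profileWalk a t i) (profileWalk a t (i + 1)) =
      (∏ x ∈ Ico 0 (profileWalk a t j).1, π x * ω x ^ (t x - t (x - 1)).toNat) *
        ω (profileWalk a t j).1 ^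
          ((profileWalk a t j).2 - t ((profileWalk a t j).1 - 1)).toNat := by
  induction j with
  | zero => simp [profileWalk, ha]
  | succ j ih =>
    obtain ⟨h₀, -, h₁, h₂⟩ := profileWalk_spec ht ha j
    rw [prod_range_succ, ih, show profileWalk a t (j + 1) =
      if t (profileWalk a t j).1 ≤ (profileWalk a t j).2 then profileWalk a t j + (1, 0)
      else profileWalk a t j + (0, 1) from rfl]
    generalize profileWalk a t j = p at h₀ h₁ h₂ ⊢
    obtain ⟨x, y⟩ := p
    dsimp only at h₀ h₁ h₂ ⊢
    split_ifs with h
    · obtain rfl : y = t x := le_antisymm h₂ h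
      rw [monoStepWeight_add_right]
      simp only [Prod.mk_add_mk, add_zero, add_sub_cancel_right,
        sub_self, Int.toNat_zero, pow_zero, Ico_add_one_right_eq_Icc,
        ← prod_Ico_mul_eq_prod_Icc h₀]
      ring
    · rw [monoStepWeight_add_up]
      simp only [Prod.mk_add_mk, add_zero,
        show (y + 1 - t (x - 1)).toNat = (y - t (x - 1)).toNat + 1 by omega, pow_succ]
      ring

end profileWalk

section IsProfile

variable {lo hi : ℤ → ℤ} {a b m ℓ : ℤ} {t : ℤ → ℤ}

lemma IsProfile.exists_profileWalk_eq (ht : IsProfile a b m t) {p : ℤ × ℤ}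
    (hp : p ∈ staircase t) (hp₀ : 0 ≤ p.1) (hpm : p.1 ≤ m) :
    ∃ j : ℕ, (j : ℤ) ≤ m + b - a ∧ profileWalk a t j = p := by
  have ha := ht.left_le (p.1 - 1)
  have hb := ht.le_right p.1
  obtain ⟨hp₁, hp₂⟩ := hp
  refine ⟨(p.1 + p.2 - a).toNat, by omega, ?_⟩
  exact profileWalk_eq_of_mem_staircase ht.monotone (ht.eq_left _ (by norm_num)) ⟨hp₁, hp₂⟩
    (by omega)

lemma IsProfile.profileWalk_fst_le (ht : IsProfile a b m t) {j : ℕ} (hj : (j : ℤ) ≤ m + b - a) :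
    (profileWalk a t j).1 ≤ m := by
  obtain ⟨-, hsum, hwalk, -⟩ := profileWalk_spec ht.monotone (ht.eq_left _ (by norm_num)) j
  by_contra! hm
  have := ht.eq_right ((profileWalk a t j).1 - 1) (by omega)
  omega

lemma IsProfile.profileWalk_last (ht : IsProfile a b m t) {n : ℕ} (hn : (n : ℤ) = m + b - a) :
    profileWalk a t n = (m, b) := by
  refine profileWalk_eq_of_mem_staircase ht.monotone (ht.eq_left _ (by norm_num)) ?_ (by simp [hn])
  exact ⟨ht.eq_right m le_rfl ▸ ht.monotone (by omega), (ht.eq_right m le_rfl).ge⟩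

lemma IsProfile.le_of_profileWalk_eq {t' : ℤ → ℤ} (ht : IsProfile a b m t)
    (ht' : IsProfile a b m t')
    (h : ∀ j : ℕ, (j : ℤ) ≤ m + b - a → profileWalk a t j = profileWalk a t' j) {x : ℤ}
    (hx₀ : 0 ≤ x) (hxm : x ≤ m) : t x ≤ t' x := by
  obtain ⟨j, hj, hwalk⟩ := ht.exists_profileWalk_eq (p := (x, t x))
    ⟨ht.monotone (by simp), le_rfl⟩ hx₀ hxm
  have := (profileWalk_spec ht'.monotone (ht'.eq_left _ (by norm_num)) j).2.2.2
  rwa [← h j hj, hwalk] at this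

lemma IsProfile.eq_of_profileWalk_eq {t' : ℤ → ℤ} (ht : IsProfile a b m t)
    (ht' : IsProfile a b m t')
    (h : ∀ j : ℕ, (j : ℤ) ≤ m + b - a → profileWalk a t j = profileWalk a t' j) : t = t' := by
  funext x
  by_cases hx₀ : x < 0
  · rw [ht.eq_left x hx₀, ht'.eq_left x hx₀]
  by_cases hxm : m ≤ x
  · rw [ht.eq_right x hxm, ht'.eq_right x hxm]
  exact le_antisymm (ht.le_of_profileWalk_eq ht' h (by omega) (by omega))
    (ht'.le_of_profileWalk_eq ht (fun j hj => (h j hj).symm) (by omega) (by omega))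

lemma IsProfile.forall_profileWalk_mem_region_iff (ht : IsProfile a b m t) :
    (∀ j : ℕ, (j : ℤ) ≤ m + b - a → profileWalk a t j ∈ Region m lo hi) ↔
      ∀ x, 0 ≤ x → x ≤ m → lo x ≤ t (x - 1) ∧ t x ≤ hi x := by
  constructor
  · intro h x hx₀ hxm
    obtain ⟨i, hi, hwi⟩ := ht.exists_profileWalk_eq (p := (x, t (x - 1)))
      ⟨le_rfl, ht.monotone (by omega)⟩ hx₀ hxm
    obtain ⟨j, hj, hwj⟩ := ht.exists_profileWalk_eq (p := (x, t x))
      ⟨ht.monotone (by omega), le_rfl⟩ hx₀ hxm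
    exact ⟨(hwi ▸ h i hi).2.2.1, (hwj ▸ h j hj).2.2.2⟩
  · intro h j hj
    obtain ⟨h₀, -, h₁, h₂⟩ := profileWalk_spec ht.monotone (ht.eq_left _ (by norm_num)) j
    have hm := ht.profileWalk_fst_le hj
    have := h _ h₀ hm
    exact ⟨h₀, hm, by omega, by omega⟩

lemma IsProfile.exists_first_hit (ht : IsProfile a b m t) (hℓ₀ : 0 ≤ ℓ) (hℓm : ℓ ≤ m) :
    ∃ j : ℕ, (j : ℤ) ≤ m + b - a ∧ profileWalk a t j = (ℓ, t (ℓ - 1)) ∧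
      ∀ i < j, (profileWalk a t i).1 ≠ ℓ := by
  obtain ⟨j, hj, hwj⟩ := ht.exists_profileWalk_eq (p := (ℓ, t (ℓ - 1)))
    ⟨le_rfl, ht.monotone (by omega)⟩ hℓ₀ hℓm
  refine ⟨j, hj, hwj, fun i hij hi => ?_⟩
  have := add_le_of_le_profileWalk_fst ht.monotone (ht.eq_left _ (by norm_num)) hi.ge
  have := (profileWalk_spec ht.monotone (ht.eq_left _ (by norm_num)) j).2.1
  rw [hwj] at this
  dsimp only at this
  omega

end IsProfile

noncomputable def exitTime (W : ℕ → ℤ × ℤ) (n : ℕ) (x : ℤ) : ℕ :=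
  Nat.find (⟨n, .inl le_rfl⟩ : ∃ j, n ≤ j ∨ x < (W j).1)

section exitTime

variable {W : ℕ → ℤ × ℤ} {n : ℕ} {a b m : ℤ}

lemma exitTime_le_of_lt {x : ℤ} {j : ℕ} (hj : x < (W j).1) : exitTime W n x ≤ j :=
  Nat.find_min' _ (.inr hj)

lemma le_exitTime_of_fst_le (hW : Monotone W) {x : ℤ} {j : ℕ} (hjn : j ≤ n)
    (hj : (W j).1 ≤ x) : j ≤ exitTime W n x := by
  refine (Nat.le_find_iff _ _).2 fun i hij => ?_
  have := (hW hij.le).1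
  omega

lemma exitTime_mono {x y : ℤ} (hxy : x ≤ y) : exitTime W n x ≤ exitTime W n y :=
  Nat.find_mono fun _ => Or.imp_right hxy.trans_lt

lemma exists_isProfile_of_monotone (hW : Monotone W) (h₀ : W 0 = (0, a)) (hn : W n = (m, b))
    (hstep : ∀ j < n, W (j + 1) - W j ∈ monoSteps) :
    ∃ t, IsProfile a b m t ∧ ∀ j ≤ n, W j = profileWalk a t j := by
  -- `t x` is the height at which `W` leaves column `x`
  let t x := (W (exitTime W n x)).2
  have hW₂ {i j : ℕ} (hij : i ≤ j) : (W i).2 ≤ (W j).2 := (hW hij).2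
  refine ⟨t, ⟨fun x y hxy => hW₂ (exitTime_mono hxy), fun x hx => ?_, fun x hx => ?_⟩, ?_⟩
  · have : exitTime W n x = 0 := Nat.le_zero.1 (exitTime_le_of_lt (by simpa [h₀] using hx))
    simp only [t, this, h₀]
  · have : exitTime W n x = n := le_antisymm (Nat.find_min' _ (.inl le_rfl))
      (le_exitTime_of_fst_le hW le_rfl (by simp [hn, hx]))
    simp only [t, this, hn]
  intro j hj
  induction j with
  | zero => exact h₀
  | succ j ih =>
    rw [show profileWalk a t (j + 1) =
      if t (profileWalk a t j).1 ≤ (profileWalk a t j).2 then profileWalk a t j + (1, 0)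
      else profileWalk a t j + (0, 1) from rfl, ← ih (by omega)]
    have hj' : j < n := by omega
    simp only [monoSteps, Set.mem_insert_iff, Set.mem_singleton_iff, sub_eq_iff_eq_add']
      at hstep
    rcases hstep j hj' with h | h <;> rw [h]
    · have := hW₂ (exitTime_le_of_lt (W := W) (n := n) (x := (W j).1) (j := j + 1) (by simp [h]))
      simp only [h, Prod.snd_add, add_zero] at this
      exact (if_pos this).symm
    · have := hW₂ (le_exitTime_of_fst_le hW hj (x := (W j).1) (by simp [h]))
      simp only [h, Prod.snd_add] at this
      exact (if_neg (show ¬(W (exitTime W n (W j).1)).2 ≤ (W j).2 by omega)).symm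

end exitTime

def IsExitPath (Γ : Set (ℤ × ℤ)) (a m b ℓ k : ℤ) (ξ : LatticePath) : Prop :=
  (ξ.1 : ℤ) = m + b - a ∧
  ξ.2 0 = (0, a) ∧ ξ.2 (Fin.last ξ.1) = (m, b) ∧
  (∀ t : Fin ξ.1, ξ.2 t.succ - ξ.2 t.castSucc ∈ monoSteps) ∧
  (∀ t, ξ.2 t ∈ Γ) ∧
  (∃ t, ξ.2 t = (ℓ, k) ∧ ∀ s < t, (ξ.2 s).1 ≠ ℓ)

noncomputable def LatticePath.weight (π ω : ℤ → ℝ) (ξ : LatticePath) : ℝ :=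
  ∏ t : Fin ξ.1, monoStepWeight π ω (ξ.2 t.castSucc) (ξ.2 t.succ)

lemma monoExit_eq_tsum (π ω : ℤ → ℝ) (Γ : Set (ℤ × ℤ)) (a m b ℓ k : ℤ) :
    monoExit π ω Γ a m b ℓ k = ∑' ξ : {ξ // IsExitPath Γ a m b ℓ k ξ}, ξ.1.weight π ω :=
  rfl

def profilePath (a : ℤ) (t : ℤ → ℤ) (n : ℕ) : LatticePath :=
  ⟨n, fun j => profileWalk a t j⟩

lemma LatticePath.exists_eq_profilePath {a b m : ℤ} (ξ : LatticePath) (h₀ : ξ.2 0 = (0, a))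
    (hlast : ξ.2 (Fin.last ξ.1) = (m, b))
    (hstep : ∀ j : Fin ξ.1, ξ.2 j.succ - ξ.2 j.castSucc ∈ monoSteps) :
    ∃ t, IsProfile a b m t ∧ ξ = profilePath a t ξ.1 := by
  obtain ⟨n, w⟩ := ξ
  let W (j : ℕ) : ℤ × ℤ := w ⟨min j n, by omega⟩
  have hW_eq {j : ℕ} (hj : j ≤ n) : W j = w ⟨j, by omega⟩ := by simp only [W, min_eq_left hj]
  have hWstep : ∀ j < n, W (j + 1) - W j ∈ monoSteps := fun j hj => by
    rw [hW_eq hj, hW_eq hj.le]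
    exact hstep ⟨j, hj⟩
  have hW : Monotone W := monotone_nat_of_le_succ fun j => by
    rcases lt_or_ge j n with hj | hj
    · exact le_of_sub_mem_monoSteps (hWstep j hj)
    · simp only [W, min_eq_right hj, min_eq_right (hj.trans j.le_succ), le_rfl]
  obtain ⟨t, ht, hwalk⟩ := exists_isProfile_of_monotone hW ((hW_eq n.zero_le).trans h₀)
    ((hW_eq le_rfl).trans hlast) hWstep
  refine ⟨t, ht, congrArg (Sigma.mk n) (funext fun j => ?_)⟩
  rw [← hW_eq (Nat.le_of_lt_succ j.isLt), hwalk j (Nat.le_of_lt_succ j.isLt)]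

section IsProfile

variable {lo hi : ℤ → ℤ} {a b m ℓ k : ℤ} {t : ℤ → ℤ}

lemma IsProfile.isExitPath_profilePath_iff (ht : IsProfile a b m t) (hℓ₀ : 0 ≤ ℓ)
    (hℓm : ℓ ≤ m) :
    IsExitPath (Region m lo hi) a m b ℓ k (profilePath a t (m + b - a).toNat) ↔
      IsExitProfile lo hi a b m ℓ k t := by
  have hN : ((m + b - a).toNat : ℤ) = m + b - a :=
    Int.toNat_of_nonneg (by linarith [(ht.left_le m).trans (ht.le_right m)])
  have hregion : (∀ j : Fin ((m + b - a).toNat + 1), profileWalk a t j ∈ Region m lo hi) ↔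
      ∀ j : ℕ, (j : ℤ) ≤ m + b - a → profileWalk a t j ∈ Region m lo hi :=
    ⟨fun h j hj => h ⟨j, by omega⟩, fun h j => h j (by omega)⟩
  obtain ⟨j, hjN, hj, hjmin⟩ := ht.exists_first_hit hℓ₀ hℓm
  constructor
  · rintro ⟨-, -, -, -, hreg, s, hs, hsmin⟩
    have hreg := ht.forall_profileWalk_mem_region_iff.1 (hregion.1 hreg)
    obtain rfl : (s : ℕ) = j := by
      by_contra hne
      rcases Nat.lt_or_gt_of_ne hne with hlt | hlt
      · exact hjmin s hlt (congrArg Prod.fst hs)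
      · exact hsmin ⟨j, show j < (m + b - a).toNat + 1 by omega⟩ hlt (congrArg Prod.fst hj)
    exact { ht with
      lo_le := fun x hx₀ hxm => (hreg x hx₀ hxm).1
      le_hi := fun x hx₀ hxm => (hreg x hx₀ hxm).2
      exit_eq := (congrArg Prod.snd (hj.symm.trans hs) :) }
  · intro h
    refine ⟨hN, rfl, ht.profileWalk_last hN, fun _ => profileWalk_succ_sub_mem_monoSteps _,
      hregion.2 (ht.forall_profileWalk_mem_region_iff.2 fun x hx₀ hxm =>
        ⟨h.lo_le x hx₀ hxm, h.le_hi x hx₀ hxm⟩),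
      ⟨j, show j < (m + b - a).toNat + 1 by omega⟩, h.exit_eq ▸ hj, fun i hi => hjmin i hi⟩

lemma IsProfile.weight_profilePath (π ω : ℤ → ℝ) (ht : IsProfile a b m t) (hm : 0 ≤ m) :
    (profilePath a t (m + b - a).toNat).weight π ω =
      (∏ x ∈ Ico 0 m, π x) * columnWeight ω m t := by
  have hN : ((m + b - a).toNat : ℤ) = m + b - a :=
    Int.toNat_of_nonneg (by linarith [(ht.left_le m).trans (ht.le_right m)])
  have hweight : (profilePath a t (m + b - a).toNat).weight π ω =
      ∏ i ∈ range (m + b - a).toNat,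
        monoStepWeight π ω (profileWalk a t i) (profileWalk a t (i + 1)) :=
    Fin.prod_univ_eq_prod_range (fun i => monoStepWeight π ω (profileWalk a t i)
      (profileWalk a t (i + 1))) _
  rw [hweight, prod_monoStepWeight_profileWalk π ω ht.monotone (ht.eq_left _ (by norm_num)),
    ht.profileWalk_last hN, columnWeight,
    ← prod_Ico_mul_eq_prod_Icc hm, ht.eq_right m le_rfl, prod_mul_distrib, mul_assoc]

end IsProfile

lemma profileWalk_eq_of_profilePath_eq {a : ℤ} {t t' : ℤ → ℤ} {n j : ℕ}
    (h : profilePath a t n = profilePath a t' n) (hj : j ≤ n) :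
    profileWalk a t j = profileWalk a t' j :=
  congr_fun (eq_of_heq (Sigma.mk.inj h).2) ⟨j, Nat.lt_succ_of_le hj⟩

variable (lo hi : ℤ → ℤ) (a b m ℓ k : ℤ) in
noncomputable def exitProfileEquiv (hℓ₀ : 0 ≤ ℓ) (hℓm : ℓ ≤ m) :
    {t // t ∈ exitProfiles lo hi a b m ℓ k} ≃ {ξ // IsExitPath (Region m lo hi) a m b ℓ k ξ} :=
  Equiv.ofBijective (fun t => ⟨profilePath a t (m + b - a).toNat,
      ((mem_exitProfiles.1 t.2).isExitPath_profilePath_iff hℓ₀ hℓm).2 (mem_exitProfiles.1 t.2)⟩)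
    ⟨fun ⟨t, ht⟩ ⟨t', ht'⟩ h => Subtype.ext <|
      (mem_exitProfiles.1 ht).eq_of_profileWalk_eq (mem_exitProfiles.1 ht').toIsProfile
        fun _ hj => profileWalk_eq_of_profilePath_eq (congrArg Subtype.val h) (by omega),
    fun ⟨ξ, hξ⟩ => by
      obtain ⟨t, ht, hξt⟩ := ξ.exists_eq_profilePath hξ.2.1 hξ.2.2.1 hξ.2.2.2.1
      have hlen := hξ.1
      rw [show ξ.1 = (m + b - a).toNat by omega] at hξt
      exact ⟨⟨t, mem_exitProfiles.2 ((ht.isExitPath_profilePath_iff hℓ₀ hℓm).1 (hξt ▸ hξ))⟩,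
        Subtype.ext hξt.symm⟩⟩

lemma monoExit_region_eq (π ω : ℤ → ℝ) {lo hi : ℤ → ℤ} {a b m ℓ k : ℤ} (hℓ₀ : 0 ≤ ℓ)
    (hℓm : ℓ ≤ m) :
    monoExit π ω (Region m lo hi) a m b ℓ k =
      (∏ x ∈ Ico 0 m, π x) * ∑ t ∈ exitProfiles lo hi a b m ℓ k, columnWeight ω m t := by
  rw [monoExit_eq_tsum, ← (exitProfileEquiv lo hi a b m ℓ k hℓ₀ hℓm).tsum_eq]
  refine (Finset.tsum_subtype (exitProfiles lo hi a b m ℓ k)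
    fun t => (profilePath a t (m + b - a).toNat).weight π ω).trans ?_
  rw [mul_sum]
  exact sum_congr rfl fun t ht => (mem_exitProfiles.1 ht).weight_profilePath π ω (by omega)

theorem monotone_log_concave_general
    (m : ℤ) (lo hi : ℤ → ℤ)
    (a b ℓ : ℤ) (hℓ1 : 0 < ℓ) (hℓ2 : ℓ < m)
    (π ω : ℤ → ℝ) (hω : ∀ i, 0 ≤ ω i)
    (k : ℤ) :
    monoExit π ω (Region m lo hi) a m b ℓ (k + 1) *
        monoExit π ω (Region m lo hi) a m b ℓ (k - 1) ≤
      monoExit π ω (Region m lo hi) a m b ℓ k ^ 2 := by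
  simp only [monoExit_region_eq π ω hℓ1.le hℓ2.le, mul_mul_mul_comm, mul_pow, ← sq]
  exact mul_le_mul_of_nonneg_left (sum_columnWeight_exitProfiles_mul_le hω) (sq_nonneg _)

/-- Corollary 4.2: log-concavity for monotone walks (weighted counting form). -/
theorem monotone_log_concave
    (m : ℤ) (hm : 1 ≤ m) (lo hi : ℤ → ℤ)
    (hlohi : ∀ i, 0 ≤ i → i ≤ m → lo i ≤ hi i)
    (hoverlap : ∀ i, 0 ≤ i → i < m → max (lo i) (lo (i + 1)) ≤ min (hi i) (hi (i + 1)))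
    (a b ℓ : ℤ) (hℓ1 : 0 < ℓ) (hℓ2 : ℓ < m)
    (hA : ((0 : ℤ), a) ∈ Region m lo hi) (hB : (m, b) ∈ Region m lo hi)
    (π ω : ℤ → ℝ) (hπ : ∀ i, 0 ≤ π i) (hω : ∀ i, 0 ≤ ω i)
    (k : ℤ) (hk1 : lo ℓ ≤ k - 1) (hk2 : k + 1 ≤ hi ℓ) :
    monoExit π ω (Region m lo hi) a m b ℓ (k + 1) *
        monoExit π ω (Region m lo hi) a m b ℓ (k - 1) ≤
      monoExit π ω (Region m lo hi) a m b ℓ k ^ 2 :=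
  monotone_log_concave_general m lo hi a b ℓ hℓ1 hℓ2 π ω hω k
end

section
/- Log-concavity for Dyck paths in a region (Corollary 4.3): fix integers m ≥ 1 and b with m + b even, Dyck height functions f, g with f(0) = g(0) = 0, f(m) = g(m) = b and g(i) < f(i) for all 0 < i < m (two nonintersecting Dyck paths from A = (0,0) to B = (m,b)), and fix 0 < ℓ < m. For k ∈ ℤ let N(k) be the number of Dyck height functions ζ with ζ(0) = 0, ζ(m) = b, g(i) ≤ ζ(i) ≤ f(i) for all 0 ≤ i ≤ m, and ζ(ℓ) = k. Then N(k)² ≥ N(k+2)·N(k−2) for every k ∈ ℤ with g(ℓ) ≤ k−2 and k+2 ≤ f(ℓ). -/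
private def swapF (s t : ℕ) (ζ₁ ζ₂ : ℕ → ℤ) : ℕ → ℤ :=
  fun i => if s ≤ i ∧ i ≤ t then ζ₂ i + 2 else ζ₁ i

private def swapG (s t : ℕ) (ζ₁ ζ₂ : ℕ → ℤ) : ℕ → ℤ :=
  fun i => if s ≤ i ∧ i ≤ t then ζ₁ i - 2 else ζ₂ i

private def StP (m ℓ s t : ℕ) (ζ₁ ζ₂ : ℕ → ℤ) : Prop :=
  s < ℓ ∧ ℓ < t ∧ t ≤ m ∧ ζ₁ s - ζ₂ s = 2 ∧ ζ₁ t - ζ₂ t = 2 ∧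
    (∀ j, s < j → j ≤ ℓ → 4 ≤ ζ₁ j - ζ₂ j) ∧ (∀ j, ℓ ≤ j → j < t → 4 ≤ ζ₁ j - ζ₂ j)

private lemma step_cases {x : ℤ} (h : |x| = 1) : x = 1 ∨ x = -1 := by
  rcases abs_cases x with ⟨h1, _⟩ | ⟨h1, _⟩ <;> omega

private lemma even_diff (m : ℕ) (ζ₁ ζ₂ : ℕ → ℤ)
    (h₁ : ∀ i < m, |ζ₁ (i+1) - ζ₁ i| = 1) (h₂ : ∀ i < m, |ζ₂ (i+1) - ζ₂ i| = 1)
    (h10 : ζ₁ 0 = 0) (h20 : ζ₂ 0 = 0) :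
    ∀ i ≤ m, (ζ₁ i - ζ₂ i) % 2 = 0 := by
  intro i
  induction i with
  | zero => intro _; omega
  | succ n ih =>
    intro hn
    have e := ih (by omega)
    have a := step_cases (h₁ n (by omega))
    have b := step_cases (h₂ n (by omega))
    omega

private lemma swap_st (m ℓ : ℕ) (b k : ℤ) (hℓ1 : 0 < ℓ) (hℓ2 : ℓ < m) (ζ₁ ζ₂ : ℕ → ℤ)
    (h₁ : ∀ i < m, |ζ₁ (i+1) - ζ₁ i| = 1) (h₂ : ∀ i < m, |ζ₂ (i+1) - ζ₂ i| = 1)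
    (h10 : ζ₁ 0 = 0) (h20 : ζ₂ 0 = 0) (h1m : ζ₁ m = b) (h2m : ζ₂ m = b)
    (hv1 : ζ₁ ℓ = k + 2) (hv2 : ζ₂ ℓ = k - 2) :
    ∃ s t, StP m ℓ s t ζ₁ ζ₂ := by
  classical
  have hev := even_diff m ζ₁ ζ₂ h₁ h₂ h10 h20
  have hdl : ζ₁ ℓ - ζ₂ ℓ = 4 := by omega
  obtain ⟨s, hsl, hPs, hgt⟩ :
      ∃ s, s ≤ ℓ ∧ ζ₁ s - ζ₂ s ≤ 2 ∧ ∀ j, s < j → j ≤ ℓ → ¬ (ζ₁ j - ζ₂ j ≤ 2) := by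
    refine ⟨Nat.findGreatest (fun i => ζ₁ i - ζ₂ i ≤ 2) ℓ, Nat.findGreatest_le ℓ,
      Nat.findGreatest_spec (P := fun i => ζ₁ i - ζ₂ i ≤ 2) (Nat.zero_le ℓ) (by omega), ?_⟩
    intro j hj hjl
    exact Nat.findGreatest_is_greatest (P := fun i => ζ₁ i - ζ₂ i ≤ 2) hj hjl
  have hgt4 : ∀ j, s < j → j ≤ ℓ → 4 ≤ ζ₁ j - ζ₂ j := by
    intro j hj hjl
    have h3 := hgt j hj hjl
    have := hev j (by omega)
    omega
  have hsℓ : s < ℓ := by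
    rcases Nat.lt_or_ge s ℓ with h | h
    · exact h
    · exfalso; have : s = ℓ := le_antisymm hsl h; subst this; omega
  have hds : ζ₁ s - ζ₂ s = 2 := by
    have h4 := hgt4 (s+1) (by omega) (by omega)
    have a := step_cases (h₁ s (by omega))
    have b := step_cases (h₂ s (by omega))
    have := hev s (by omega)
    rcases a with a | a <;> rcases b with b | b <;> omega
  have hQ : ∃ i, ℓ ≤ i ∧ ζ₁ i - ζ₂ i ≤ 2 := ⟨m, by omega, by omega⟩
  obtain ⟨t, hQt1, hQt2, htm, hmint⟩ :
      ∃ t, ℓ ≤ t ∧ ζ₁ t - ζ₂ t ≤ 2 ∧ t ≤ m ∧ ∀ j, j < t → ¬ (ℓ ≤ j ∧ ζ₁ j - ζ₂ j ≤ 2) := by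
    refine ⟨Nat.find hQ, (Nat.find_spec hQ).1, (Nat.find_spec hQ).2,
      Nat.find_min' hQ ⟨le_of_lt hℓ2, by omega⟩, fun j hj => Nat.find_min hQ hj⟩
  have hlt2 : ∀ j, ℓ ≤ j → j < t → 4 ≤ ζ₁ j - ζ₂ j := by
    intro j hj hjt
    have hmin := hmint j hjt
    push_neg at hmin
    have := hev j (by omega)
    have := hmin hj
    omega
  have hℓt : ℓ < t := by
    rcases Nat.lt_or_ge ℓ t with h | h
    · exact h
    · exfalso; have : t = ℓ := le_antisymm h hQt1; subst this; omega
  have hdt : ζ₁ t - ζ₂ t = 2 := by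
    have h4 := hlt2 (t-1) (by omega) (by omega)
    have a := step_cases (h₁ (t-1) (by omega))
    have b := step_cases (h₂ (t-1) (by omega))
    have ht1 : t - 1 + 1 = t := by omega
    rw [ht1] at a b
    have := hev t (by omega)
    rcases a with a | a <;> rcases b with b | b <;> omega
  exact ⟨s, t, hsℓ, hℓt, htm, hds, hdt, hgt4, hlt2⟩

private lemma swap_eval (s t : ℕ) (ζ₁ ζ₂ : ℕ → ℤ) (hd₁ : ζ₁ s - ζ₂ s = 2)
    (hd₂ : ζ₁ t - ζ₂ t = 2) (hst : s ≤ t) (i : ℕ) :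
    (i ≤ s → swapF s t ζ₁ ζ₂ i = ζ₁ i ∧ swapG s t ζ₁ ζ₂ i = ζ₂ i) ∧
    (t ≤ i → swapF s t ζ₁ ζ₂ i = ζ₁ i ∧ swapG s t ζ₁ ζ₂ i = ζ₂ i) ∧
    (s ≤ i → i ≤ t → swapF s t ζ₁ ζ₂ i = ζ₂ i + 2 ∧ swapG s t ζ₁ ζ₂ i = ζ₁ i - 2) := by
  unfold swapF swapG
  by_cases hc : s ≤ i ∧ i ≤ t
  · rw [if_pos hc, if_pos hc]
    refine ⟨fun h => ?_, fun h => ?_, fun _ _ => ⟨rfl, rfl⟩⟩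
    · have : i = s := le_antisymm h hc.1
      subst this; constructor <;> omega
    · have : i = t := le_antisymm hc.2 h
      subst this; constructor <;> omega
  · rw [if_neg hc, if_neg hc]
    exact ⟨fun _ => ⟨rfl, rfl⟩, fun _ => ⟨rfl, rfl⟩, fun h1 h2 => absurd ⟨h1, h2⟩ hc⟩

private lemma swap_path (m ℓ s t : ℕ) (b k : ℤ) (f g ζ₁ ζ₂ : ℕ → ℤ)
    (hℓ2 : ℓ < m)
    (h₁ : ∀ i < m, |ζ₁ (i+1) - ζ₁ i| = 1) (h₂ : ∀ i < m, |ζ₂ (i+1) - ζ₂ i| = 1)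
    (h10 : ζ₁ 0 = 0) (h20 : ζ₂ 0 = 0) (h1m : ζ₁ m = b) (h2m : ζ₂ m = b)
    (hb1 : ∀ i ≤ m, g i ≤ ζ₁ i ∧ ζ₁ i ≤ f i) (hb2 : ∀ i ≤ m, g i ≤ ζ₂ i ∧ ζ₂ i ≤ f i)
    (hv1 : ζ₁ ℓ = k + 2) (hv2 : ζ₂ ℓ = k - 2)
    (hst : StP m ℓ s t ζ₁ ζ₂) :
    (∀ i < m, |swapF s t ζ₁ ζ₂ (i+1) - swapF s t ζ₁ ζ₂ i| = 1) ∧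
    swapF s t ζ₁ ζ₂ 0 = 0 ∧ swapF s t ζ₁ ζ₂ m = b ∧
    (∀ i ≤ m, g i ≤ swapF s t ζ₁ ζ₂ i ∧ swapF s t ζ₁ ζ₂ i ≤ f i) ∧
    swapF s t ζ₁ ζ₂ ℓ = k ∧
    (∀ i < m, |swapG s t ζ₁ ζ₂ (i+1) - swapG s t ζ₁ ζ₂ i| = 1) ∧
    swapG s t ζ₁ ζ₂ 0 = 0 ∧ swapG s t ζ₁ ζ₂ m = b ∧
    (∀ i ≤ m, g i ≤ swapG s t ζ₁ ζ₂ i ∧ swapG s t ζ₁ ζ₂ i ≤ f i) ∧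
    swapG s t ζ₁ ζ₂ ℓ = k := by
  obtain ⟨hsℓ, hℓt, htm, hds, hdt, hint1, hint2⟩ := hst
  have hst' : s ≤ t := by omega
  have E := fun i => swap_eval s t ζ₁ ζ₂ hds hdt hst' i
  have dge : ∀ i, s ≤ i → i ≤ t → 2 ≤ ζ₁ i - ζ₂ i := by
    intro i h1 h2
    rcases Nat.eq_or_lt_of_le h1 with h | h
    · subst h; omega
    rcases Nat.le_total i ℓ with h3 | h3
    · have := hint1 i h h3; omega
    rcases Nat.eq_or_lt_of_le h2 with h4 | h4
    · subst h4; omega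
    · have := hint2 i h3 h4; omega
  have stepF : ∀ i < m, |swapF s t ζ₁ ζ₂ (i+1) - swapF s t ζ₁ ζ₂ i| = 1 := by
    intro i hi
    have hcase : i + 1 ≤ s ∨ (s ≤ i ∧ i + 1 ≤ t) ∨ t ≤ i := by omega
    rcases hcase with h | ⟨ha, hb⟩ | h
    · rw [((E (i+1)).1 h).1, ((E i).1 (by omega)).1]; exact h₁ i hi
    · rw [((E (i+1)).2.2 (by omega) hb).1, ((E i).2.2 ha (by omega)).1,
        show ζ₂ (i+1) + 2 - (ζ₂ i + 2) = ζ₂ (i+1) - ζ₂ i by ring]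
      exact h₂ i hi
    · rw [((E (i+1)).2.1 (by omega)).1, ((E i).2.1 h).1]; exact h₁ i hi
  have stepG : ∀ i < m, |swapG s t ζ₁ ζ₂ (i+1) - swapG s t ζ₁ ζ₂ i| = 1 := by
    intro i hi
    have hcase : i + 1 ≤ s ∨ (s ≤ i ∧ i + 1 ≤ t) ∨ t ≤ i := by omega
    rcases hcase with h | ⟨ha, hb⟩ | h
    · rw [((E (i+1)).1 h).2, ((E i).1 (by omega)).2]; exact h₂ i hi
    · rw [((E (i+1)).2.2 (by omega) hb).2, ((E i).2.2 ha (by omega)).2,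
        show ζ₁ (i+1) - 2 - (ζ₁ i - 2) = ζ₁ (i+1) - ζ₁ i by ring]
      exact h₁ i hi
    · rw [((E (i+1)).2.1 (by omega)).2, ((E i).2.1 h).2]; exact h₂ i hi
  have bndF : ∀ i ≤ m, g i ≤ swapF s t ζ₁ ζ₂ i ∧ swapF s t ζ₁ ζ₂ i ≤ f i := by
    intro i hi
    have hcase : i ≤ s ∨ (s ≤ i ∧ i ≤ t) ∨ t ≤ i := by omega
    rcases hcase with h | ⟨ha, hb⟩ | h
    · rw [((E i).1 h).1]; exact hb1 i hi
    · rw [((E i).2.2 ha hb).1]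
      have := dge i ha hb
      have b1 := hb1 i hi; have b2 := hb2 i hi
      constructor <;> omega
    · rw [((E i).2.1 h).1]; exact hb1 i hi
  have bndG : ∀ i ≤ m, g i ≤ swapG s t ζ₁ ζ₂ i ∧ swapG s t ζ₁ ζ₂ i ≤ f i := by
    intro i hi
    have hcase : i ≤ s ∨ (s ≤ i ∧ i ≤ t) ∨ t ≤ i := by omega
    rcases hcase with h | ⟨ha, hb⟩ | h
    · rw [((E i).1 h).2]; exact hb2 i hi
    · rw [((E i).2.2 ha hb).2]
      have := dge i ha hb
      have b1 := hb1 i hi; have b2 := hb2 i hi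
      constructor <;> omega
    · rw [((E i).2.1 h).2]; exact hb2 i hi
  refine ⟨stepF, ?_, ?_, bndF, ?_, stepG, ?_, ?_, bndG, ?_⟩
  · rw [((E 0).1 (Nat.zero_le s)).1]; exact h10
  · rw [((E m).2.1 htm).1]; exact h1m
  · rw [((E ℓ).2.2 (by omega) (by omega)).1]; omega
  · rw [((E 0).1 (Nat.zero_le s)).2]; exact h20
  · rw [((E m).2.1 htm).2]; exact h2m
  · rw [((E ℓ).2.2 (by omega) (by omega)).2]; omega

private lemma swap_inj (m ℓ s t s' t' : ℕ) (ζ₁ ζ₂ ζ₁' ζ₂' : ℕ → ℤ)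
    (hst : StP m ℓ s t ζ₁ ζ₂) (hst' : StP m ℓ s' t' ζ₁' ζ₂')
    (hF : ∀ i ≤ m, swapF s t ζ₁ ζ₂ i = swapF s' t' ζ₁' ζ₂' i)
    (hG : ∀ i ≤ m, swapG s t ζ₁ ζ₂ i = swapG s' t' ζ₁' ζ₂' i) :
    ∀ i ≤ m, ζ₁ i = ζ₁' i ∧ ζ₂ i = ζ₂' i := by
  obtain ⟨a1, a2, a3, a4, a5, a6, a7⟩ := hst
  obtain ⟨b1, b2, b3, b4, b5, b6, b7⟩ := hst'
  have key : ∀ i ≤ m, (s ≤ i ∧ i ≤ t) → (s' ≤ i ∧ i ≤ t') → ζ₁ i = ζ₁' i ∧ ζ₂ i = ζ₂' i := by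
    intro i him hc hc'
    have hf := hF i him
    have hg := hG i him
    simp only [swapF, swapG, if_pos hc, if_pos hc'] at hf hg
    constructor <;> omega
  have hss : s = s' := by
    by_contra hne
    rcases Nat.lt_or_ge s s' with h | h
    · have hk := key s' (by omega) ⟨by omega, by omega⟩ ⟨le_refl _, by omega⟩
      have h6 := a6 s' h (by omega)
      omega
    · have h' : s' < s := by omega
      have hk := key s (by omega) ⟨le_refl _, by omega⟩ ⟨by omega, by omega⟩
      have h6 := b6 s h' (by omega)
      omega
  have htt : t = t' := by
    by_contra hne
    rcases Nat.lt_or_ge t t' with h | h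
    · have hk := key t (by omega) ⟨by omega, le_refl _⟩ ⟨by omega, by omega⟩
      have h7 := b7 t (by omega) h
      omega
    · have h' : t' < t := by omega
      have hk := key t' (by omega) ⟨by omega, by omega⟩ ⟨by omega, le_refl _⟩
      have h7 := a7 t' (by omega) h'
      omega
  subst hss
  subst htt
  intro i him
  by_cases hc : s ≤ i ∧ i ≤ t
  · exact key i him hc hc
  · have hf := hF i him
    have hg := hG i him
    simp only [swapF, swapG, if_neg hc] at hf hg
    exact ⟨hf, hg⟩

private def extend (m : ℕ) (ζ : Fin (m+1) → ℤ) : ℕ → ℤ :=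
  fun i => ζ ⟨min i m, Nat.lt_succ_of_le (Nat.min_le_right i m)⟩

private lemma extend_at (m : ℕ) (ζ : Fin (m+1) → ℤ) (i : ℕ) (h' : i < m + 1) :
    extend m ζ i = ζ ⟨i, h'⟩ := by
  unfold extend
  congr 1
  exact Fin.ext (by simp; omega)

private lemma extend_eq (m : ℕ) (ζ : Fin (m+1) → ℤ) (i : Fin (m+1)) :
    extend m ζ (i : ℕ) = ζ i := by
  rw [extend_at m ζ i i.isLt]

private lemma toNatProps (m : ℕ) (b : ℤ) (f g ζ : Fin (m+1) → ℤ)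
    (hs : ∀ i : Fin m, |ζ i.succ - ζ i.castSucc| = 1)
    (h0 : ζ 0 = 0) (hm : ζ (Fin.last m) = b)
    (hb : ∀ i, g i ≤ ζ i ∧ ζ i ≤ f i) :
    (∀ i < m, |extend m ζ (i+1) - extend m ζ i| = 1) ∧ extend m ζ 0 = 0 ∧
    extend m ζ m = b ∧
    (∀ i ≤ m, extend m g i ≤ extend m ζ i ∧ extend m ζ i ≤ extend m f i) := by
  refine ⟨?_, ?_, ?_, ?_⟩
  · intro i hi
    rw [extend_at m ζ (i+1) (by omega), extend_at m ζ i (by omega)]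
    have := hs ⟨i, hi⟩
    simpa [Fin.succ_mk, Fin.castSucc_mk] using this
  · rw [extend_at m ζ 0 (by omega), Fin.mk_zero]
    exact h0
  · rw [extend_at m ζ m (by omega)]
    exact hm
  · intro i hi
    rw [extend_at m ζ i (by omega), extend_at m g i (by omega), extend_at m f i (by omega)]
    exact hb _

private lemma ofNatProps (m : ℕ) (b : ℤ) (f g : Fin (m+1) → ℤ) (η : ℕ → ℤ)
    (hs : ∀ i < m, |η (i+1) - η i| = 1) (h0 : η 0 = 0) (hm : η m = b)
    (hb : ∀ i ≤ m, extend m g i ≤ η i ∧ η i ≤ extend m f i) :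
    (∀ i : Fin m, |η (i.succ : ℕ) - η (i.castSucc : ℕ)| = 1) ∧
    η ((0 : Fin (m+1)) : ℕ) = 0 ∧ η ((Fin.last m : Fin (m+1)) : ℕ) = b ∧
    (∀ i : Fin (m+1), g i ≤ η (i : ℕ) ∧ η (i : ℕ) ≤ f i) := by
  refine ⟨?_, ?_, ?_, ?_⟩
  · intro i
    simp only [Fin.val_succ, Fin.coe_castSucc]
    exact hs i i.isLt
  · simpa using h0
  · simpa using hm
  · intro i
    have hbi := hb (i : ℕ) (by omega)
    rw [extend_eq, extend_eq] at hbi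
    exact hbi

private def DyckSet (m : ℕ) (b : ℤ) (f g : Fin (m + 1) → ℤ) (ℓ : ℕ)
    (hℓ : ℓ < m + 1) (k : ℤ) : Type :=
  {ζ : Fin (m + 1) → ℤ //
    (∀ i : Fin m, |ζ i.succ - ζ i.castSucc| = 1) ∧
    ζ 0 = 0 ∧ ζ (Fin.last m) = b ∧
    (∀ i, g i ≤ ζ i ∧ ζ i ≤ f i) ∧
    ζ ⟨ℓ, hℓ⟩ = k}

private lemma dyckSet_finite (m : ℕ) (b : ℤ) (f g : Fin (m + 1) → ℤ) (ℓ : ℕ)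
    (hℓ : ℓ < m + 1) (k : ℤ) : Finite (DyckSet m b f g ℓ hℓ k) := by
  haveI : ∀ i : Fin (m + 1), Finite (Set.Icc (g i) (f i)) :=
    fun i => (Set.finite_Icc _ _).to_subtype
  apply Finite.of_injective (β := ∀ i : Fin (m + 1), Set.Icc (g i) (f i))
    (fun ζ i => ⟨ζ.1 i, Set.mem_Icc.mpr (ζ.2.2.2.2.1 i)⟩)
  intro x y h
  apply Subtype.ext; funext i
  exact congrArg Subtype.val (congrFun h i)

private lemma key_lemma (m : ℕ) (b : ℤ) (f g : Fin (m + 1) → ℤ) (ℓ : ℕ)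
    (hℓ1 : 0 < ℓ) (hℓ2 : ℓ < m) (hℓ : ℓ < m + 1) (k : ℤ)
    (p : DyckSet m b f g ℓ hℓ (k + 2) × DyckSet m b f g ℓ hℓ (k - 2)) :
    ∃ (q : DyckSet m b f g ℓ hℓ k × DyckSet m b f g ℓ hℓ k) (s t : ℕ),
      StP m ℓ s t (extend m p.1.1) (extend m p.2.1) ∧
      q.1.1 = (fun i : Fin (m + 1) => swapF s t (extend m p.1.1) (extend m p.2.1) (i : ℕ)) ∧
      q.2.1 = (fun i : Fin (m + 1) => swapG s t (extend m p.1.1) (extend m p.2.1) (i : ℕ)) := by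
  obtain ⟨⟨ζ₁, hz11, hz12, hz13, hz14, hz15⟩, ⟨ζ₂, hz21, hz22, hz23, hz24, hz25⟩⟩ := p
  obtain ⟨hs1, h01, hm1, hb1⟩ := toNatProps m b f g ζ₁ hz11 hz12 hz13 hz14
  obtain ⟨hs2, h02, hm2, hb2⟩ := toNatProps m b f g ζ₂ hz21 hz22 hz23 hz24
  have hv1 : extend m ζ₁ ℓ = k + 2 := by
    rw [extend_at m _ ℓ hℓ]; exact hz15
  have hv2 : extend m ζ₂ ℓ = k - 2 := by
    rw [extend_at m _ ℓ hℓ]; exact hz25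
  obtain ⟨s, t, hSTP⟩ := swap_st m ℓ b k hℓ1 hℓ2 (extend m ζ₁) (extend m ζ₂)
    hs1 hs2 h01 h02 hm1 hm2 hv1 hv2
  obtain ⟨stepF, h0F, hmF, hbF, hlF, stepG, h0G, hmG, hbG, hlG⟩ :=
    swap_path m ℓ s t b k (extend m f) (extend m g)
      (extend m ζ₁) (extend m ζ₂) hℓ2
      hs1 hs2 h01 h02 hm1 hm2 hb1 hb2 hv1 hv2 hSTP
  obtain ⟨A1, A2, A3, A4⟩ :=
    ofNatProps m b f g (swapF s t (extend m ζ₁) (extend m ζ₂)) stepF h0F hmF hbF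
  obtain ⟨B1, B2, B3, B4⟩ :=
    ofNatProps m b f g (swapG s t (extend m ζ₁) (extend m ζ₂)) stepG h0G hmG hbG
  exact ⟨⟨⟨fun i => swapF s t (extend m ζ₁) (extend m ζ₂) (i : ℕ),
      A1, A2, A3, A4, hlF⟩,
    ⟨fun i => swapG s t (extend m ζ₁) (extend m ζ₂) (i : ℕ),
      B1, B2, B3, B4, hlG⟩⟩, s, t, hSTP, rfl, rfl⟩

private lemma card_lemma (m : ℕ) (b : ℤ) (f g : Fin (m + 1) → ℤ) (ℓ : ℕ)
    (hℓ1 : 0 < ℓ) (hℓ2 : ℓ < m) (hℓ : ℓ < m + 1) (k : ℤ) :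
    Nat.card (DyckSet m b f g ℓ hℓ (k + 2)) * Nat.card (DyckSet m b f g ℓ hℓ (k - 2)) ≤
      Nat.card (DyckSet m b f g ℓ hℓ k) ^ 2 := by
  classical
  haveI := dyckSet_finite m b f g ℓ hℓ k
  rw [sq, ← Nat.card_prod, ← Nat.card_prod]
  choose Φ S T hSTP hq1 hq2 using key_lemma m b f g ℓ hℓ1 hℓ2 hℓ k
  apply Nat.card_le_card_of_injective Φ
  intro p p' hqq
  have e1 := ((hq1 p).symm.trans (congrArg (fun q => q.1.1) hqq)).trans (hq1 p')
  have e2 := ((hq2 p).symm.trans (congrArg (fun q => q.2.1) hqq)).trans (hq2 p')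
  have hFm : ∀ i ≤ m, swapF (S p) (T p) (extend m p.1.1) (extend m p.2.1) i =
      swapF (S p') (T p') (extend m p'.1.1) (extend m p'.2.1) i := by
    intro i hi
    exact congrFun e1 ⟨i, by omega⟩
  have hGm : ∀ i ≤ m, swapG (S p) (T p) (extend m p.1.1) (extend m p.2.1) i =
      swapG (S p') (T p') (extend m p'.1.1) (extend m p'.2.1) i := by
    intro i hi
    exact congrFun e2 ⟨i, by omega⟩
  have hinj := swap_inj m ℓ (S p) (T p) (S p') (T p')
    (extend m p.1.1) (extend m p.2.1) (extend m p'.1.1) (extend m p'.2.1)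
    (hSTP p) (hSTP p') hFm hGm
  have E1 : p.1.1 = p'.1.1 := by
    funext j
    have hj := (hinj (j : ℕ) (by omega)).1
    rwa [extend_eq, extend_eq] at hj
  have E2 : p.2.1 = p'.2.1 := by
    funext j
    have hj := (hinj (j : ℕ) (by omega)).2
    rwa [extend_eq, extend_eq] at hj
  exact Prod.ext (Subtype.ext E1) (Subtype.ext E2)

/-- Corollary 4.3: log-concavity for Dyck paths in a region between two
nonintersecting Dyck paths, encoded by height functions. -/
theorem dyck_log_concave (m : ℕ) (hm : 1 ≤ m) (b : ℤ) (hmb : Even ((m : ℤ) + b))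
    (f g : Fin (m + 1) → ℤ)
    (hf : ∀ i : Fin m, |f i.succ - f i.castSucc| = 1)
    (hg : ∀ i : Fin m, |g i.succ - g i.castSucc| = 1)
    (hf0 : f 0 = 0) (hg0 : g 0 = 0)
    (hfm : f (Fin.last m) = b) (hgm : g (Fin.last m) = b)
    (hfg : ∀ i : Fin (m + 1), 0 < (i : ℕ) → (i : ℕ) < m → g i < f i)
    (ℓ : ℕ) (hℓ1 : 0 < ℓ) (hℓ2 : ℓ < m)
    (N : ℤ → ℕ)
    (hN : ∀ k, N k = Nat.card {ζ : Fin (m + 1) → ℤ //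
      (∀ i : Fin m, |ζ i.succ - ζ i.castSucc| = 1) ∧
      ζ 0 = 0 ∧ ζ (Fin.last m) = b ∧
      (∀ i, g i ≤ ζ i ∧ ζ i ≤ f i) ∧
      ζ ⟨ℓ, by omega⟩ = k})
    (k : ℤ) (hk1 : g ⟨ℓ, by omega⟩ ≤ k - 2) (hk2 : k + 2 ≤ f ⟨ℓ, by omega⟩) :
    N (k + 2) * N (k - 2) ≤ N k ^ 2 := by
  have hℓ : ℓ < m + 1 := by omega
  have hNk : ∀ k', N k' = Nat.card (DyckSet m b f g ℓ hℓ k') := fun k' => hN k'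
  rw [hNk, hNk, hNk]
  exact card_lemma m b f g ℓ hℓ1 hℓ2 hℓ k
end

section
/- Log-concavity of Delannoy numbers (Example 4.6, new enumerative result): for all integers n ≥ 2 and 1 ≤ k ≤ n−1, one has D(k, n−k)² ≥ D(k+1, n−k−1) · D(k−1, n−k+1). -/
/-- The Delannoy number `D(a,b) = Σ_j C(a,j) C(b,j) 2^j`, the number of lattice paths
from `(0,0)` to `(a,b)` with steps `(1,0)`, `(0,1)` and `(1,1)`. -/
def delannoy (a b : ℕ) : ℕ :=
  ∑ j ∈ Finset.range (min a b + 1), a.choose j * b.choose j * 2 ^ j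

/-!
Write `ρ(a,b) = D(a+1,b)/D(a,b)` and `σ(a,b) = D(a,b+1)/D(a,b)`, so `σ(a,b) = ρ(b,a)` by symmetry.
The recurrence `D(a+1,b+1) = D(a,b+1) + D(a+1,b) + D(a,b)` reads `ρ(a,b+1) = 1 + (ρ(a,b) + 1)/σ(a,b)`,
and an induction on `a + b + r + d` shows that `ρ(a,b) ≤ ρ(r,d)` whenever `r ≤ a` and `b ≤ d`.
Log-concavity along the anti-diagonal then comes from two such comparisons:
`D(k+1,m-1) D(k-1,m+1) ≤ D(k,m-1) D(k,m+1) ≤ D(k,m)²`.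
-/

open Finset

theorem delannoy_eq_sum_range {a b N : ℕ} (h : min a b < N) :
    delannoy a b = ∑ j ∈ range N, a.choose j * b.choose j * 2 ^ j := by
  refine sum_subset (range_subset_range.2 h) fun j hj hj' => ?_
  simp only [mem_range, not_lt] at hj hj'
  rcases le_total a b with hab | hab
  · simp [Nat.choose_eq_zero_of_lt (show a < j by omega)]
  · simp [Nat.choose_eq_zero_of_lt (show b < j by omega)]

theorem delannoy_comm (a b : ℕ) : delannoy a b = delannoy b a := by
  simp only [delannoy, min_comm a b, mul_comm (a.choose _)]

theorem delannoy_zero_right (a : ℕ) : delannoy a 0 = 1 := by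
  simp [delannoy]

theorem delannoy_pos (a b : ℕ) : 0 < delannoy a b :=
  sum_pos' (fun _ _ => Nat.zero_le _) ⟨0, by simp⟩

theorem delannoy_succ_succ (a b : ℕ) :
    delannoy (a + 1) (b + 1) = delannoy a (b + 1) + delannoy (a + 1) b + delannoy a b := by
  set t : ℕ → ℕ → ℕ → ℕ := fun a b j => a.choose j * b.choose j * 2 ^ j with ht
  have pascal (j : ℕ) : t (a + 1) (b + 1) (j + 1) + t a b (j + 1) =
      t a (b + 1) (j + 1) + t (a + 1) b (j + 1) + 2 * t a b j := by
    simp only [ht, Nat.choose_succ_succ', pow_succ]; ring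
  have hsum : ∑ j ∈ range (a + b + 2), (t (a + 1) (b + 1) j + t a b j) =
      ∑ j ∈ range (a + b + 2), (t a (b + 1) j + t (a + 1) b j) +
        2 * ∑ j ∈ range (a + b + 1), t a b j := by
    simp only [sum_range_succ' _ (a + b + 1), pascal, sum_add_distrib, mul_sum]
    simp only [ht, Nat.choose_zero_right, mul_one, pow_zero]; ring
  simp only [ht, sum_add_distrib] at hsum
  rw [← delannoy_eq_sum_range (a := a + 1) (b := b + 1) (by omega),
    ← delannoy_eq_sum_range (a := a) (b := b) (N := a + b + 2) (by omega),
    ← delannoy_eq_sum_range (a := a) (b := b + 1) (by omega),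
    ← delannoy_eq_sum_range (a := a + 1) (b := b) (by omega),
    ← delannoy_eq_sum_range (a := a) (b := b) (N := a + b + 1) (by omega)] at hsum
  omega

theorem delannoy_le_succ_left (a b : ℕ) : delannoy a b ≤ delannoy (a + 1) b := by
  cases b with
  | zero => simp [delannoy_zero_right]
  | succ b => rw [delannoy_succ_succ]; omega

theorem delannoy_succ_left_mul_le_mul_succ_left :
    ∀ {a b r d : ℕ}, r ≤ a → b ≤ d →
      delannoy (a + 1) b * delannoy r d ≤ delannoy a b * delannoy (r + 1) d
  | a, 0, r, d, _, _ => by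
    simpa [delannoy_zero_right] using delannoy_le_succ_left r d
  | a, b + 1, r, d + 1, hra, hbd => by
    have hρ := delannoy_succ_left_mul_le_mul_succ_left hra (Nat.le_of_succ_le_succ hbd)
    have hσ := delannoy_succ_left_mul_le_mul_succ_left (a := d) (b := r) (r := b) (d := a)
      (Nat.le_of_succ_le_succ hbd) hra
    rw [delannoy_comm (d + 1), delannoy_comm d, delannoy_comm b, delannoy_comm (b + 1)] at hσ
    rw [delannoy_succ_succ a, delannoy_succ_succ r]
    have hpos := delannoy_pos a b
    nlinarith
termination_by a b r d => a + b + r + d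

theorem delannoy_succ_right_mul_le_mul_succ_right {a b r d : ℕ} (har : a ≤ r) (hdb : d ≤ b) :
    delannoy a (b + 1) * delannoy r d ≤ delannoy a b * delannoy r (d + 1) := by
  simpa only [delannoy_comm _ (_ + 1), delannoy_comm a, delannoy_comm r] using
    delannoy_succ_left_mul_le_mul_succ_left (a := b) (b := a) (r := d) (d := r) hdb har

theorem delannoy_log_concave_general (n k : ℕ) (hk1 : 1 ≤ k) (hk2 : k ≤ n - 1) :
    delannoy (k + 1) (n - k - 1) * delannoy (k - 1) (n - k + 1) ≤ delannoy k (n - k) ^ 2 := by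
  obtain ⟨e, rfl⟩ : ∃ e, k = e + 1 := ⟨k - 1, by omega⟩
  obtain ⟨f, hf⟩ : ∃ f, n - (e + 1) = f + 1 := ⟨n - (e + 1) - 1, by omega⟩
  rw [hf, Nat.add_sub_cancel, Nat.add_sub_cancel]
  calc delannoy (e + 1 + 1) f * delannoy e (f + 1 + 1)
      ≤ delannoy (e + 1) f * delannoy (e + 1) (f + 2) :=
        delannoy_succ_left_mul_le_mul_succ_left e.le_succ (by omega)
    _ = delannoy (e + 1) (f + 1 + 1) * delannoy (e + 1) f := mul_comm _ _
    _ ≤ delannoy (e + 1) (f + 1) * delannoy (e + 1) (f + 1) :=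
        delannoy_succ_right_mul_le_mul_succ_right le_rfl f.le_succ
    _ = delannoy (e + 1) (f + 1) ^ 2 := (sq _).symm

/-- Example 4.6: log-concavity of Delannoy numbers. -/
theorem delannoy_log_concave (n k : ℕ) (hn : 2 ≤ n) (hk1 : 1 ≤ k) (hk2 : k ≤ n - 1) :
    delannoy (k + 1) (n - k - 1) * delannoy (k - 1) (n - k + 1) ≤ delannoy k (n - k) ^ 2 :=
  delannoy_log_concave_general n k hk1 hk2
end

section
/- Log-concavity of ballot numbers (Example 4.6): define, for integers n ≥ 0 and k with n/2 ≤ k ≤ n, the ballot number B(k, n−k) = ((2k − n + 1)/(k + 1)) · C(n,k) as a rational number. Then for all k with n/2 ≤ k − 1 and k + 1 ≤ n, one has B(k, n−k)² ≥ B(k+1, n−k−1) · B(k−1, n−k+1), i.e. ((2k−n+1)·C(n,k)/(k+1))² ≥ ((2k−n+3)·C(n,k+1)/(k+2)) · ((2k−n−1)·C(n,k−1)/k). -/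
/-! Writing `B(j)` for `B(j, n - j)`, `d = 2k - n` and `m = n - k`, the ratio of consecutive binomial coefficients gives
`B(k+1) B(k-1) / B(k)² = ((d+3)(d-1)/(d+1)²) · (m/(m+1)) · ((k+1)/(k+2))`,
a product of three factors lying in `[0, 1]` as soon as `d ≥ 1`. -/

namespace Nat

variable {K : Type*} [Field K] [CharZero K]

theorem cast_choose_succ_right (n k : ℕ) :
    (n.choose (k + 1) : K) = n.choose k * (n - k) / (k + 1) := by
  rw [eq_div_iff k.cast_add_one_ne_zero]
  rcases le_or_gt k n with hkn | hnk
  · have h := congrArg (Nat.cast : ℕ → K) (choose_succ_right_eq n k)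
    push_cast [Nat.cast_sub hkn] at h
    exact h
  · simp [choose_eq_zero_of_lt hnk, choose_eq_zero_of_lt (lt_succ_of_lt hnk)]

theorem cast_choose_pred_right {n k : ℕ} (hk : 0 < k) (hkn : k ≤ n) :
    (n.choose (k - 1) : K) = n.choose k * k / (n - k + 1) := by
  obtain ⟨j, rfl⟩ := Nat.exists_eq_succ_of_ne_zero hk.ne'
  have hne : (n : K) - (j + 1) + 1 ≠ 0 := by
    rw [sub_add, add_sub_cancel_right, sub_ne_zero]
    exact_mod_cast (Nat.lt_of_succ_le hkn).ne'
  rw [Nat.succ_sub_one, cast_choose_succ_right]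
  push_cast
  field_simp
  ring

end Nat

/-- Example 4.6: log-concavity of ballot numbers
`B(k, n-k) = ((2k - n + 1)/(k + 1)) C(n,k)`, as rational numbers. -/
theorem ballot_log_concave (n k : ℕ)
    (hk1 : (n : ℚ) / 2 ≤ (k : ℚ) - 1) (hk2 : k + 1 ≤ n) :
    ((2 * (k : ℚ) - n + 3) * (n.choose (k + 1)) / ((k : ℚ) + 2)) *
        ((2 * (k : ℚ) - n - 1) * (n.choose (k - 1)) / (k : ℚ)) ≤
      ((2 * (k : ℚ) - n + 1) * (n.choose k) / ((k : ℚ) + 1)) ^ 2 := by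
  have hk0 : (0 : ℚ) < k := by linarith [n.cast_nonneg (α := ℚ)]
  have hkn : (k : ℚ) + 1 ≤ n := by exact_mod_cast hk2
  have hd : (1 : ℚ) ≤ 2 * k - n := by linarith
  have hm : (0 : ℚ) ≤ n - k := by linarith
  rw [Nat.cast_choose_succ_right, Nat.cast_choose_pred_right (by exact_mod_cast hk0) (by omega)]
  calc _ = ((2 * (k : ℚ) - n + 1) * (n.choose k) / ((k : ℚ) + 1)) ^ 2 *
        ((2 * k - n + 3) * (2 * k - n - 1) / (2 * k - n + 1) ^ 2 *
          ((n - k) / (n - k + 1)) * ((k + 1) / (k + 2))) := by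
        field_simp
    _ ≤ _ := by
      refine mul_le_of_le_one_right (sq_nonneg _) (mul_le_one₀ (mul_le_one₀ ?_ ?_ ?_) ?_ ?_)
      · exact div_le_one_of_le₀ (by nlinarith) (sq_nonneg _)
      · positivity
      · exact div_le_one_of_le₀ (by linarith) (by linarith)
      · positivity
      · exact div_le_one_of_le₀ (by linarith) (by linarith)
end

section
/- Ladder exit probabilities at even heights (Example 4.7): for every integer r ≥ 0, Σ_{n=0}^∞ C(2(n+r), n) / 3^{2(n+r)+1} = 1/(φ^{4r}·√5), where φ = (1+√5)/2 is the golden ratio. (The left side equals Σ_{n=0}^∞ C(2n, n−r)/3^{2n+1} with the convention that C(2n, n−r) = 0 for n < r; it is the probability p(2r) that the nearest-neighbor random walk on the ladder {0,1}×ℤ started at (0,0) exits through the point (1,2r).) -/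
open Finset Filter

lemma lad_choose_le_two_pow (m k : ℕ) : m.choose k ≤ 2 ^ m := by
  rcases le_or_gt k m with h | h
  · calc m.choose k ≤ ∑ i ∈ range (m+1), m.choose i :=
        Finset.single_le_sum (fun i _ => Nat.zero_le _) (mem_range.2 (Nat.lt_succ_of_le h))
    _ = 2 ^ m := Nat.sum_range_choose m
  · simp [Nat.choose_eq_zero_of_lt h]

lemma lad_summable (r : ℕ) : Summable (fun n => ((2*(n+r)).choose n : ℝ) / 9 ^ n) := by
  have hg : Summable (fun n : ℕ => (4:ℝ)^r * (4/9)^n) :=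
    (summable_geometric_of_lt_one (by norm_num) (by norm_num)).mul_left _
  refine Summable.of_nonneg_of_le (fun n => by positivity) (fun n => ?_) hg
  have h : ((2*(n+r)).choose n : ℝ) ≤ 4 ^ (n + r) := by
    calc ((2*(n+r)).choose n : ℝ) ≤ (2:ℝ) ^ (2*(n+r)) := by
          exact_mod_cast lad_choose_le_two_pow (2*(n+r)) n
    _ = 4 ^ (n+r) := by rw [pow_mul]; norm_num
  rw [div_le_iff₀ (by positivity)]
  calc ((2*(n+r)).choose n : ℝ) ≤ 4 ^ (n+r) := h
  _ = 4^r * (4/9)^n * 9^n := by rw [pow_add, div_pow]; field_simp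

lemma lad_reflect (m : ℕ) :
    2 * ∑ k ∈ range (m+1), (k : ℝ) * (Nat.centralBinom k) * (Nat.centralBinom (m - k))
      = m * ∑ k ∈ range (m+1), (Nat.centralBinom k : ℝ) * (Nat.centralBinom (m-k)) := by
  have h1 : ∑ k ∈ range (m+1), (k:ℝ) * (Nat.centralBinom k) * (Nat.centralBinom (m-k))
      = ∑ k ∈ range (m+1), ((m-k : ℕ):ℝ) * (Nat.centralBinom (m-k)) * (Nat.centralBinom k) := by
    rw [← Finset.sum_range_reflect]
    simp only [Nat.add_sub_cancel]
    refine Finset.sum_congr rfl (fun k hk => ?_)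
    have hk' : k ≤ m := Nat.lt_succ_iff.mp (mem_range.mp hk)
    rw [Nat.sub_sub_self hk']
  rw [two_mul, Finset.mul_sum]
  nth_rewrite 1 [h1]
  rw [← Finset.sum_add_distrib]
  refine Finset.sum_congr rfl (fun k hk => ?_)
  have hk' : k ≤ m := Nat.lt_succ_iff.mp (mem_range.mp hk)
  have : ((m - k : ℕ) : ℝ) = (m : ℝ) - k := by
    rw [Nat.cast_sub hk']
  rw [this]; ring

lemma lad_conv (n : ℕ) :
    ∑ k ∈ range (n+1), (Nat.centralBinom k : ℝ) * (Nat.centralBinom (n-k)) = 4 ^ n := by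
  induction n with
  | zero => simp [Nat.centralBinom]
  | succ n ih =>
    have hmul : ∀ i : ℕ, ((i:ℝ)+1) * (Nat.centralBinom (i+1)) = 2 * (2*i+1) * Nat.centralBinom i := by
      intro i
      exact_mod_cast congrArg (Nat.cast : ℕ → ℝ) (Nat.succ_mul_centralBinom_succ i)
    have key : ((n:ℝ)+1) * ∑ k ∈ range (n+2), (Nat.centralBinom k : ℝ) * (Nat.centralBinom (n+1-k))
        = 4 * ((n:ℝ)+1) * ∑ k ∈ range (n+1), (Nat.centralBinom k : ℝ) * (Nat.centralBinom (n-k)) := by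
      have hL : ((n:ℝ)+1) * ∑ k ∈ range (n+2), (Nat.centralBinom k : ℝ) * (Nat.centralBinom (n+1-k))
          = 2 * ∑ k ∈ range (n+2), (k : ℝ) * (Nat.centralBinom k) * (Nat.centralBinom (n+1-k)) := by
        rw [lad_reflect (n+1)]; push_cast; ring
      have hshift : ∑ k ∈ range (n+2), (k : ℝ) * (Nat.centralBinom k) * (Nat.centralBinom (n+1-k))
          = ∑ i ∈ range (n+1), ((i:ℝ)+1) * (Nat.centralBinom (i+1)) * (Nat.centralBinom (n-i)) := by
        rw [Finset.sum_range_succ']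
        simp
      have hterm : ∑ i ∈ range (n+1), ((i:ℝ)+1) * (Nat.centralBinom (i+1)) * (Nat.centralBinom (n-i))
          = 4 * ∑ i ∈ range (n+1), (i:ℝ) * (Nat.centralBinom i) * (Nat.centralBinom (n-i))
            + 2 * ∑ i ∈ range (n+1), (Nat.centralBinom i : ℝ) * (Nat.centralBinom (n-i)) := by
        rw [Finset.mul_sum, Finset.mul_sum, ← Finset.sum_add_distrib]
        refine Finset.sum_congr rfl (fun i _ => ?_)
        rw [hmul i]; ring
      rw [hL, hshift, hterm]
      have h2 : 2 * ∑ i ∈ range (n+1), (i:ℝ) * (Nat.centralBinom i) * (Nat.centralBinom (n-i))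
          = n * ∑ k ∈ range (n+1), (Nat.centralBinom k : ℝ) * (Nat.centralBinom (n-k)) :=
        lad_reflect n
      nlinarith [h2]
    have hpos : ((n:ℝ)+1) ≠ 0 := by positivity
    have h4 : ((n:ℝ)+1) * ∑ k ∈ range (n+2), (Nat.centralBinom k : ℝ) * (Nat.centralBinom (n+1-k))
        = ((n:ℝ)+1) * (4 * ∑ k ∈ range (n+1), (Nat.centralBinom k : ℝ) * (Nat.centralBinom (n-k))) := by
      rw [key]; ring
    have := mul_left_cancel₀ hpos h4
    rw [this, ih]; ring

lemma lad_summable_CB : Summable (fun n => (Nat.centralBinom n : ℝ) / 9 ^ n) := by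
  have := lad_summable 0
  simpa [Nat.centralBinom] using this

lemma lad_B : (∑' n : ℕ, (Nat.centralBinom n : ℝ) / 9 ^ n) = 3 / Real.sqrt 5 := by
  set f : ℕ → ℝ := fun n => (Nat.centralBinom n : ℝ) / 9 ^ n with hf
  have hs : Summable f := lad_summable_CB
  have hnorm : Summable (fun n => ‖f n‖) := by
    refine hs.congr (fun n => ?_)
    rw [Real.norm_eq_abs, abs_of_nonneg (by positivity)]
  have hB2 : (∑' n, f n) * (∑' n, f n) = 9/5 := by
    rw [tsum_mul_tsum_eq_tsum_sum_range_of_summable_norm hnorm hnorm]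
    have hterm : ∀ n : ℕ, ∑ k ∈ range (n+1), f k * f (n - k) = (4/9)^n := by
      intro n
      have : ∀ k ∈ range (n+1), f k * f (n-k)
          = ((Nat.centralBinom k : ℝ) * (Nat.centralBinom (n-k))) / 9^n := by
        intro k hk
        have hk' : k ≤ n := Nat.lt_succ_iff.mp (mem_range.mp hk)
        rw [hf]
        simp only []
        rw [div_mul_div_comm, ← pow_add]
        congr 2
        omega
      rw [Finset.sum_congr rfl this, ← Finset.sum_div, lad_conv, div_pow]
    rw [tsum_congr hterm, tsum_geometric_of_lt_one (by norm_num) (by norm_num)]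
    norm_num
  have hBnn : 0 ≤ ∑' n, f n := tsum_nonneg (fun n => by positivity)
  have h5 : (0:ℝ) < Real.sqrt 5 := Real.sqrt_pos.mpr (by norm_num)
  have htar : (3 / Real.sqrt 5) * (3 / Real.sqrt 5) = 9/5 := by
    rw [div_mul_div_comm, Real.mul_self_sqrt (by norm_num)]
    norm_num
  nlinarith [hB2, htar, hBnn, h5, div_pos (by norm_num : (0:ℝ) < 3) h5]

noncomputable def ladG (r : ℕ) : ℝ := ∑' n : ℕ, ((2*(n+r)).choose n : ℝ) / 9 ^ n

lemma lad_pascal (n r : ℕ) : (2*n+2*r+6).choose (n+2)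
    = (2*n+2*r+4).choose (n+2) + 2*((2*n+2*r+4).choose (n+1)) + (2*n+2*r+4).choose n := by
  set m := 2*n+2*r+4 with hm
  have e1 : (m+2).choose (n+2) = (m+1).choose (n+1) + (m+1).choose (n+2) :=
    Nat.choose_succ_succ (m+1) (n+1)
  have e2 : (m+1).choose (n+1) = m.choose n + m.choose (n+1) := Nat.choose_succ_succ m n
  have e3 : (m+1).choose (n+2) = m.choose (n+1) + m.choose (n+2) := Nat.choose_succ_succ m (n+1)
  have : 2*n+2*r+6 = m + 2 := by omega
  rw [this, e1, e2, e3]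
  ring

lemma lad_rec (r : ℕ) : ladG (r+2) = 63 * ladG (r+1) - 81 * ladG r := by
  set a : ℕ → ℕ → ℝ := fun s n => ((2*(n+s)).choose n : ℝ) / 9 ^ n with ha
  have hH : ∀ s, HasSum (a s) (ladG s) := fun s => (lad_summable s).hasSum
  have hshift : ∀ s, HasSum (fun n => a s (n+2)) (ladG s - (a s 0 + a s 1)) := by
    intro s
    refine (hasSum_nat_add_iff 2).2 ?_
    have : ladG s - (a s 0 + a s 1) + ∑ i ∈ range 2, a s i = ladG s := by
      rw [Finset.sum_range_succ, Finset.sum_range_one]; ring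
    rw [this]
    exact hH s
  have h0 : ∀ n, a (r+1) (n+2) = a r (n+2) + (2/9) * a (r+1) (n+1) + (1/81) * a (r+2) n := by
    intro n
    have hp := lad_pascal n r
    have h1 : 2*((n+2)+(r+1)) = 2*n+2*r+6 := by ring
    have h2 : 2*((n+2)+r) = 2*n+2*r+4 := by ring
    have h3 : 2*((n+1)+(r+1)) = 2*n+2*r+4 := by ring
    have h4 : 2*(n+(r+2)) = 2*n+2*r+4 := by ring
    rw [ha]
    simp only [h1, h2, h3, h4]
    have h9 : (9:ℝ)^(n+2) = 9^n * 81 := by rw [pow_add]; norm_num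
    have h9' : (9:ℝ)^(n+1) = 9^n * 9 := by rw [pow_add]; norm_num
    rw [hp]
    push_cast
    rw [h9, h9']
    have : (9:ℝ)^n ≠ 0 := by positivity
    field_simp
    ring
  have hsum2 : HasSum (fun n => a r (n+2) + (2/9) * a (r+1) (n+1) + (1/81) * a (r+2) n)
      ((ladG r - (a r 0 + a r 1)) + (2/9) * (ladG (r+1) - a (r+1) 0) + (1/81) * ladG (r+2)) := by
    have hs1 : HasSum (fun n => a (r+1) (n+1)) (ladG (r+1) - a (r+1) 0) := by
      refine (hasSum_nat_add_iff 1).2 ?_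
      have : ladG (r+1) - a (r+1) 0 + ∑ i ∈ range 1, a (r+1) i = ladG (r+1) := by
        rw [Finset.sum_range_one]; ring
      rw [this]; exact hH (r+1)
    exact ((hshift r).add (hs1.mul_left (2/9))).add ((hH (r+2)).mul_left (1/81))
  have hEq : HasSum (fun n => a (r+1) (n+2))
      ((ladG r - (a r 0 + a r 1)) + (2/9) * (ladG (r+1) - a (r+1) 0) + (1/81) * ladG (r+2)) := by
    have hfe : (fun n => a r (n+2) + (2/9) * a (r+1) (n+1) + (1/81) * a (r+2) n)
        = (fun n => a (r+1) (n+2)) := funext (fun n => (h0 n).symm)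
    rwa [hfe] at hsum2
  have hu := (hshift (r+1)).unique hEq
  have hv0 : ∀ s, a s 0 = 1 := by
    intro s; rw [ha]; simp
  have hv1 : ∀ s, a s 1 = (2*(1+s))/9 := by
    intro s; rw [ha]; simp [Nat.choose_one_right]
  simp only [hv0, hv1] at hu
  push_cast at hu
  linarith

lemma lad_bound (r n : ℕ) : ((2*(n+r)).choose n : ℝ) / 9 ^ n ≤ 4^r * (4/9)^n := by
  have h : ((2*(n+r)).choose n : ℝ) ≤ 4 ^ (n + r) := by
    calc ((2*(n+r)).choose n : ℝ) ≤ (2:ℝ) ^ (2*(n+r)) := by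
          exact_mod_cast lad_choose_le_two_pow (2*(n+r)) n
    _ = 4 ^ (n+r) := by rw [pow_mul]; norm_num
  rw [div_le_iff₀ (by positivity)]
  calc ((2*(n+r)).choose n : ℝ) ≤ 4 ^ (n+r) := h
  _ = 4^r * (4/9)^n * 9^n := by rw [pow_add, div_pow]; field_simp

lemma ladG_nonneg (r : ℕ) : 0 ≤ ladG r :=
  tsum_nonneg (fun n => by positivity)

lemma ladG_le (r : ℕ) : ladG r ≤ 9/5 * 4^r := by
  have hgs : Summable (fun n : ℕ => (4:ℝ)^r * (4/9)^n) :=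
    (summable_geometric_of_lt_one (by norm_num) (by norm_num)).mul_left _
  calc ladG r ≤ ∑' n : ℕ, (4:ℝ)^r * (4/9)^n :=
        Summable.tsum_le_tsum (lad_bound r) (lad_summable r) hgs
  _ = (4:ℝ)^r * ∑' n : ℕ, ((4:ℝ)/9)^n := tsum_mul_left
  _ = (4:ℝ)^r * (9/5) := by
        rw [tsum_geometric_of_lt_one (by norm_num) (by norm_num)]; norm_num
  _ = 9/5 * 4^r := by ring

lemma ladG_closed (r : ℕ) :
    ladG r = (3 / Real.sqrt 5) * ((63 - 27*Real.sqrt 5)/2)^r := by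
  set s := Real.sqrt 5 with hs
  have hs2 : s^2 = 5 := Real.sq_sqrt (by norm_num)
  have hsnn : 0 ≤ s := Real.sqrt_nonneg 5
  have hsl : 2 < s := by nlinarith
  have hsu : s < 9/4 := by nlinarith
  set q : ℝ := (63 - 27*s)/2 with hq
  set q' : ℝ := (63 + 27*s)/2 with hq'
  have hq0 : 0 < q := by rw [hq]; linarith
  have hq'58 : 58 < q' := by rw [hq']; linarith
  have hqq : q * q' = 81 := by
    have : q * q' = (63^2 - 27^2 * s^2)/4 := by rw [hq, hq']; ring
    rw [hs2] at this; rw [this]; norm_num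
  have hqsum : q + q' = 63 := by rw [hq, hq']; ring
  -- u r = u 0 * q'^r
  have hu : ∀ m : ℕ, ladG (m+1) - q * ladG m = (ladG 1 - q * ladG 0) * q'^m := by
    intro m
    induction m with
    | zero => simp
    | succ m ih =>
      have hrec := lad_rec m
      have : ladG (m+2) - q * ladG (m+1) = q' * (ladG (m+1) - q * ladG m) := by
        rw [hrec]; linear_combination (ladG m) * hqq - (ladG (m+1)) * hqsum
      rw [this, ih, pow_succ]; ring
  set u0 : ℝ := ladG 1 - q * ladG 0 with hu0
  have habs : ∀ m : ℕ, |u0| ≤ 9/5 * (4 + q) * (4/q')^m := by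
    intro m
    have hq'pos : (0:ℝ) < q' := by linarith
    have hq'pow : (0:ℝ) < q'^m := by positivity
    have h1 : ladG (m+1) - q * ladG m ≤ 9/5 * (4+q) * 4^m := by
      have := ladG_le (m+1)
      have h2 := ladG_nonneg m
      have h3 : (4:ℝ)^(m+1) = 4 * 4^m := by rw [pow_succ]; ring
      nlinarith [ladG_nonneg (m+1), hq0]
    have h2 : -(9/5 * (4+q) * 4^m) ≤ ladG (m+1) - q * ladG m := by
      have := ladG_le m
      nlinarith [ladG_nonneg (m+1), hq0, pow_pos (by norm_num : (0:ℝ) < 4) m]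
    have habs1 : |u0 * q'^m| ≤ 9/5 * (4+q) * 4^m := by
      rw [← hu m]; rw [abs_le]; constructor <;> [exact h2; exact h1]
    rw [abs_mul, abs_of_pos hq'pow] at habs1
    have hrw : 9/5*(4+q)*(4/q')^m = (9/5*(4+q)*4^m)/q'^m := by rw [div_pow]; ring
    rw [hrw, le_div_iff₀ hq'pow]
    exact habs1
  have hlim : Tendsto (fun m : ℕ => 9/5 * (4 + q) * (4/q')^m) atTop (nhds 0) := by
    have h01 : (0:ℝ) ≤ 4/q' := by positivity
    have h11 : (4:ℝ)/q' < 1 := by rw [div_lt_one (by linarith)]; linarith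
    have := (tendsto_pow_atTop_nhds_zero_of_lt_one h01 h11).const_mul (9/5 * (4 + q))
    simpa using this
  have hu0z : u0 = 0 := by
    have hle : |u0| ≤ 0 := ge_of_tendsto' hlim (fun m => habs m)
    have := abs_nonneg u0
    have : |u0| = 0 := le_antisymm hle this
    exact abs_eq_zero.mp this
  have hstep : ∀ m : ℕ, ladG (m+1) = q * ladG m := by
    intro m
    have := hu m
    rw [hu0z] at this
    simp at this
    linarith
  have hG0 : ladG 0 = 3 / s := by
    rw [ladG, ← lad_B]
    apply tsum_congr
    intro n
    simp [Nat.centralBinom]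
  induction r with
  | zero => simpa using hG0
  | succ m ih =>
    rw [hstep m, ih, pow_succ]; ring

/-- Example 4.7: the ladder exit probability at even heights,
`p(2r) = Σ_n C(2(n+r), n) / 3^{2(n+r)+1} = 1/(φ^{4r} √5)`. -/
theorem ladder_exit_even (r : ℕ) :
    ∑' n : ℕ, ((2 * (n + r)).choose n : ℝ) / 3 ^ (2 * (n + r) + 1) =
      1 / (((1 + Real.sqrt 5) / 2) ^ (4 * r) * Real.sqrt 5) := by
  set s := Real.sqrt 5 with hs
  have hs2 : s^2 = 5 := Real.sq_sqrt (by norm_num)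
  have hsnn : 0 ≤ s := Real.sqrt_nonneg 5
  have hsl : 2 < s := by nlinarith
  have hL : ∑' n : ℕ, ((2 * (n + r)).choose n : ℝ) / 3 ^ (2 * (n + r) + 1)
      = (1/(3 * 9^r)) * ladG r := by
    rw [ladG, ← tsum_mul_left]
    apply tsum_congr
    intro n
    have hp : (3:ℝ) ^ (2 * (n + r) + 1) = 3 * 9^r * 9^n := by
      rw [pow_succ, pow_mul]
      norm_num
      rw [pow_add]
      ring
    rw [hp]
    have h9n : (9:ℝ)^n ≠ 0 := by positivity
    have h9r : (9:ℝ)^r ≠ 0 := by positivity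
    field_simp
  rw [hL, ladG_closed r]
  have hφ4 : ((1 + s) / 2) ^ (4*r) = ((7 + 3*s)/2)^r := by
    rw [pow_mul]
    congr 1
    have h : ((1 + s)/2)^4 = (1 + 4*s + 6*s^2 + 4*s^2*s + s^2*s^2)/16 := by ring
    rw [hs2] at h
    rw [h]; ring
  rw [hφ4]
  have hkey : ((63 - 27*s)/2) * ((7 + 3*s)/2) * (1/9) = 1 := by
    have h : ((63 - 27*s)/2) * ((7 + 3*s)/2) * (1/9) = (441 - 81*s^2)/36 := by ring
    rw [h, hs2]; norm_num
  have hP0 : (0:ℝ) < (7 + 3*s)/2 := by linarith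
  have hq0 : (0:ℝ) < (63 - 27*s)/2 := by nlinarith
  have hpow : ((63 - 27*s)/2)^r * ((7 + 3*s)/2)^r = 9^r := by
    rw [← mul_pow]
    have : ((63 - 27*s)/2) * ((7 + 3*s)/2) = 9 := by
      nlinarith [hkey]
    rw [this]
  have hs0 : s ≠ 0 := by linarith
  have hPr : ((7 + 3*s)/2)^r ≠ 0 := by positivity
  have h9r : ((9:ℝ)^r) ≠ 0 := by positivity
  rw [eq_div_iff (by positivity : (0:ℝ) < ((7 + 3*s)/2)^r * s).ne']
  calc 1 / (3 * 9 ^ r) * (3 / s * ((63 - 27*s)/2) ^ r) * (((7 + 3*s)/2) ^ r * s)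
      = (((63 - 27*s)/2)^r * ((7 + 3*s)/2)^r) * (s / s) * (3/3) / 9^r := by ring
  _ = 1 := by rw [hpow, div_self hs0]; field_simp
end

section
/- Ladder exit probabilities at odd heights (Example 4.7): for every integer r ≥ 0, Σ_{n=0}^∞ C(2(n+r)+1, n) / 3^{2(n+r)+2} = 1/(φ^{4r+2}·√5), where φ = (1+√5)/2 is the golden ratio. (The left side equals Σ_{n=0}^∞ C(2n+1, n−r)/3^{2(n+1)} with the convention that C(2n+1, n−r) = 0 for n < r; it is the probability p(2r+1) = p(−2r−1) that the nearest-neighbor random walk on the ladder {0,1}×ℤ started at (0,0) exits through the point (1, 2r+1).) -/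
/-!
Write `T x k = ∑ₙ C(2n+k, n) xⁿ` for `0 ≤ x < 1/4`. Pascal's rule gives the linear recurrence
`T (k+1) = T k + x T (k+2)`, whose characteristic roots are `a = 2 / (1 + √(1-4x))` and `1/(ax)`.
Since `T k = O(2ᵏ)` while `1/(ax) > 2`, the large root cannot contribute, so `T k = aᵏ T 0`;
the identity `C(2n+2, n+1) = 2 C(2n+1, n)` gives `T 0 = 1 + 2x T 1`, whence `T 0 = 1/√(1-4x)`.
At `x = 1/9` one has `√(1-4x) = √5/3` and `a = 3/φ²`, and the ladder sum is `T (2r+1) / 9^(r+1)`.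
-/

open Real Filter Topology goldenRatio

noncomputable def chooseSeries (x : ℝ) (k : ℕ) : ℝ :=
  ∑' n : ℕ, ((2 * n + k).choose n : ℝ) * x ^ n

section chooseSeries

variable {x : ℝ}

lemma choose_mul_pow_le (hx : 0 ≤ x) (k n : ℕ) :
    ((2 * n + k).choose n : ℝ) * x ^ n ≤ 2 ^ k * (4 * x) ^ n := by
  have h : ((2 * n + k).choose n : ℝ) ≤ 2 ^ (2 * n + k) := mod_cast Nat.choose_le_two_pow _ _
  calc ((2 * n + k).choose n : ℝ) * x ^ n ≤ 2 ^ (2 * n + k) * x ^ n := by gcongr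
    _ = 2 ^ k * (4 * x) ^ n := by rw [pow_add, pow_mul, mul_pow]; norm_num; ring

lemma summable_choose_mul_pow (hx : 0 ≤ x) (hx4 : x < 1 / 4) (k : ℕ) :
    Summable fun n : ℕ ↦ ((2 * n + k).choose n : ℝ) * x ^ n :=
  .of_nonneg_of_le (fun _ ↦ by positivity) (choose_mul_pow_le hx k)
    ((summable_geometric_of_lt_one (by positivity) (by linarith)).mul_left _)

lemma chooseSeries_nonneg (hx : 0 ≤ x) (k : ℕ) : 0 ≤ chooseSeries x k :=
  tsum_nonneg fun _ ↦ by positivity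

lemma chooseSeries_le (hx : 0 ≤ x) (hx4 : x < 1 / 4) (k : ℕ) :
    chooseSeries x k ≤ 2 ^ k / (1 - 4 * x) := by
  have hgeom := summable_geometric_of_lt_one (by positivity : 0 ≤ 4 * x) (by linarith)
  calc chooseSeries x k ≤ ∑' n : ℕ, 2 ^ k * (4 * x) ^ n :=
        (summable_choose_mul_pow hx hx4 k).tsum_le_tsum (choose_mul_pow_le hx k)
          (hgeom.mul_left _)
    _ = 2 ^ k / (1 - 4 * x) := by
        rw [tsum_mul_left, tsum_geometric_of_lt_one (by positivity) (by linarith), div_eq_mul_inv]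

lemma chooseSeries_zero (hx : 0 ≤ x) (hx4 : x < 1 / 4) :
    chooseSeries x 0 = 1 + 2 * x * chooseSeries x 1 := by
  rw [chooseSeries, (summable_choose_mul_pow hx hx4 0).tsum_eq_zero_add, chooseSeries,
    ← tsum_mul_left]
  congr 1
  · simp
  refine tsum_congr fun n ↦ ?_
  have : (2 * (n + 1) + 0).choose (n + 1) = 2 * (2 * n + 1).choose n := by
    rw [show 2 * (n + 1) + 0 = 2 * n + 1 + 1 by ring, Nat.choose_succ_succ', Nat.choose_symm_half]
    ring
  rw [this]
  push_cast
  ring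

lemma chooseSeries_succ (hx : 0 ≤ x) (hx4 : x < 1 / 4) (k : ℕ) :
    chooseSeries x (k + 1) = chooseSeries x k + x * chooseSeries x (k + 2) := by
  have hs := summable_choose_mul_pow hx hx4
  rw [chooseSeries, (hs (k + 1)).tsum_eq_zero_add, chooseSeries, (hs k).tsum_eq_zero_add,
    chooseSeries, ← tsum_mul_left, add_assoc, ← ((summable_nat_add_iff 1).2 (hs k)).tsum_add
    ((hs (k + 2)).mul_left x)]
  congr 1
  · simp
  refine tsum_congr fun n ↦ ?_
  have : (2 * (n + 1) + (k + 1)).choose (n + 1) =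
      (2 * (n + 1) + k).choose (n + 1) + (2 * n + (k + 2)).choose n := by
    rw [show 2 * (n + 1) + (k + 1) = 2 * n + (k + 2) + 1 by ring,
      show 2 * (n + 1) + k = 2 * n + (k + 2) by ring, Nat.choose_succ_succ', add_comm]
  rw [this]
  push_cast
  ring

lemma abs_chooseSeries_succ_sub_mul_le {a : ℝ} (hx : 0 ≤ x) (hx4 : x < 1 / 4) (ha : 0 ≤ a)
    (k : ℕ) : |chooseSeries x (k + 1) - a * chooseSeries x k| ≤ (2 + a) * 2 ^ k / (1 - 4 * x) := by
  have hT := chooseSeries_le hx hx4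
  have hT0 := chooseSeries_nonneg hx
  calc |chooseSeries x (k + 1) - a * chooseSeries x k|
        ≤ chooseSeries x (k + 1) + a * chooseSeries x k := by
          rw [abs_sub_le_iff]; constructor <;> nlinarith [hT0 k, hT0 (k + 1)]
    _ ≤ 2 ^ (k + 1) / (1 - 4 * x) + a * (2 ^ k / (1 - 4 * x)) := by gcongr <;> apply hT
    _ = (2 + a) * 2 ^ k / (1 - 4 * x) := by ring

lemma chooseSeries_succ_eq_mul {a : ℝ} (hx : 0 ≤ x) (hx4 : x < 1 / 4) (ha : 0 ≤ a)
    (hroot : x * a ^ 2 - a + 1 = 0) (h2ax : 2 * a * x < 1) (k : ℕ) :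
    chooseSeries x (k + 1) = a * chooseSeries x k := by
  set T := chooseSeries x
  set D : ℕ → ℝ := fun j ↦ T (j + 1) - a * T j
  have hstep (j : ℕ) : D j = a * x * D (j + 1) := by
    linear_combination a * chooseSeries_succ hx hx4 j + T (j + 1) * hroot
  have hiter (j : ℕ) : D k = (a * x) ^ j * D (k + j) := by
    induction j with
    | zero => simp
    | succ j ih => rw [ih, ← add_assoc, hstep (k + j), pow_succ]; ring
  have hbound (j : ℕ) :
      ‖(a * x) ^ j * D (k + j)‖ ≤ (2 + a) * 2 ^ k / (1 - 4 * x) * (2 * a * x) ^ j := by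
    calc ‖(a * x) ^ j * D (k + j)‖ = (a * x) ^ j * |D (k + j)| := by
          rw [norm_mul, norm_eq_abs, norm_eq_abs, abs_of_nonneg (by positivity)]
      _ ≤ (a * x) ^ j * ((2 + a) * 2 ^ (k + j) / (1 - 4 * x)) := by
          gcongr
          exact abs_chooseSeries_succ_sub_mul_le hx hx4 ha (k + j)
      _ = (2 + a) * 2 ^ k / (1 - 4 * x) * (2 * a * x) ^ j := by ring
  have hlim : Tendsto (fun j ↦ (a * x) ^ j * D (k + j)) atTop (𝓝 0) :=
    squeeze_zero_norm hbound <| by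
      simpa using (tendsto_pow_atTop_nhds_zero_of_lt_one (by positivity) h2ax).const_mul
        ((2 + a) * 2 ^ k / (1 - 4 * x))
  have hD : D k = 0 := tendsto_nhds_unique (by simpa only [← hiter] using tendsto_const_nhds) hlim
  linarith [show D k = T (k + 1) - a * T k from rfl]

theorem chooseSeries_eq (hx : 0 ≤ x) (hx4 : x < 1 / 4) (k : ℕ) :
    chooseSeries x k = (2 / (1 + √(1 - 4 * x))) ^ k / √(1 - 4 * x) := by
  set s := √(1 - 4 * x)
  have hs : s ^ 2 = 1 - 4 * x := sq_sqrt (by linarith)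
  have hs0 : 0 < s := sqrt_pos.2 (by linarith)
  set a := 2 / (1 + s)
  have hroot : x * a ^ 2 - a + 1 = 0 := by
    simp only [a]
    field_simp
    linear_combination hs
  have h2ax : 2 * a * x < 1 := by
    rw [show 2 * a * x = 4 * x / (1 + s) by simp only [a]; ring, div_lt_one (by positivity)]
    linarith
  have hpow (k : ℕ) : chooseSeries x k = a ^ k * chooseSeries x 0 := by
    induction k with
    | zero => simp
    | succ k ih =>
      rw [chooseSeries_succ_eq_mul hx hx4 (by positivity) hroot h2ax, ih, pow_succ]; ring
  have h1 : 1 - 2 * x * a = s := by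
    simp only [a]
    field_simp
    linear_combination -hs
  have h0 : chooseSeries x 0 * s = 1 := by
    have := chooseSeries_zero hx hx4
    rw [hpow 1, pow_one] at this
    linear_combination this - chooseSeries x 0 * h1
  rw [hpow k, eq_div_iff hs0.ne', mul_assoc, h0, mul_one]

end chooseSeries

lemma sqrt_one_sub_four_ninths : √(1 - 4 * (1 / 9) : ℝ) = √5 / 3 := by
  rw [show (1 - 4 * (1 / 9) : ℝ) = 5 / 3 ^ 2 by norm_num, sqrt_div' _ (by positivity),
    sqrt_sq (by norm_num)]

lemma two_div_one_add_sqrt_five_div_three : 2 / (1 + √5 / 3) = 3 / φ ^ 2 := by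
  rw [goldenRatio_sq]
  field_simp
  ring

/-- Example 4.7: the ladder exit probability at odd heights,
`p(2r+1) = Σ_n C(2(n+r)+1, n) / 3^{2(n+r)+2} = 1/(φ^{4r+2} √5)`. -/
theorem ladder_exit_odd (r : ℕ) :
    ∑' n : ℕ, ((2 * (n + r) + 1).choose n : ℝ) / 3 ^ (2 * (n + r) + 2) =
      1 / (((1 + Real.sqrt 5) / 2) ^ (4 * r + 2) * Real.sqrt 5) := by
  have hterm (n : ℕ) : ((2 * (n + r) + 1).choose n : ℝ) / 3 ^ (2 * (n + r) + 2) =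
      (1 / 9) ^ (r + 1) * (((2 * n + (2 * r + 1)).choose n : ℝ) * (1 / 9) ^ n) := by
    rw [show 2 * (n + r) + 1 = 2 * n + (2 * r + 1) by ring,
      show (1 / 9 : ℝ) = (1 / 3) ^ 2 by norm_num, ← pow_mul, ← pow_mul, one_div_pow, one_div_pow]
    field_simp
    ring
  rw [tsum_congr hterm, tsum_mul_left, ← chooseSeries, chooseSeries_eq (by norm_num) (by norm_num),
    sqrt_one_sub_four_ninths, two_div_one_add_sqrt_five_div_three]
  change _ = 1 / (φ ^ (4 * r + 2) * √5)
  rw [show 4 * r + 2 = 2 * (2 * r + 1) by ring, pow_mul,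
    show (1 / 9 : ℝ) = (1 / 3) ^ 2 by norm_num, ← pow_mul, one_div_pow, div_pow]
  have hφ : 0 < φ ^ 2 := by positivity
  generalize φ ^ 2 = q at hφ ⊢
  field_simp
  ring
end
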